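/- arXiv:1509.02009 — 6 statements merged into one kernel-verified Lean document; each statement's English description precedes it below -/
import Mathlib

section
/- Let a > 0, b > 1 and λ ∈ ℝ. Then for every s > 0, the function s ↦ s^{b-1} E_{a,b}(λ s^a) is differentiable and d/ds [ s^{b-1} E_{a,b}(λ s^a) ] = s^{b-2} E_{a,b-1}(λ s^a). -/
open Real Filter Set

lemma ml_logconv (y c : ℝ) (hy : 0 < y) (hc1 : 0 < c) (hc2 : c ≤ 1) :
    y * Real.Gamma y ≤ Real.Gamma (y + c) * (y + c) ^ (1 - c) := by
  have hyc : (0:ℝ) < y + c := by linarith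
  have h := Real.convexOn_log_Gamma.2 (show y + c ∈ Ioi (0:ℝ) from hyc)
    (show y + c + 1 ∈ Ioi (0:ℝ) by simp; linarith) hc1.le (by linarith : (0:ℝ) ≤ 1 - c)
    (by ring)
  simp only [smul_eq_mul, Function.comp_apply] at h
  have hcomb : c * (y + c) + (1 - c) * (y + c + 1) = y + 1 := by ring
  rw [hcomb] at h
  rw [Real.Gamma_add_one hy.ne', Real.Gamma_add_one hyc.ne'] at h
  have hΓ : 0 < Real.Gamma (y + c) := Real.Gamma_pos_of_pos hyc
  have hΓy : 0 < Real.Gamma y := Real.Gamma_pos_of_pos hy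
  rw [Real.log_mul hyc.ne' hΓ.ne'] at h
  have h2 : Real.log (y * Real.Gamma y) ≤
      Real.log (Real.Gamma (y + c) * (y + c) ^ (1 - c)) := by
    rw [Real.log_mul hΓ.ne' (Real.rpow_pos_of_pos hyc _).ne', Real.log_rpow hyc]
    nlinarith [h]
  exact (Real.log_le_log_iff (by positivity) (by positivity)).1 h2

lemma ml_gamma_ratio (a c : ℝ) (ha : 0 < a) (hc : 0 < c) :
    ∀ᶠ y in atTop, c * Real.Gamma y ≤ Real.Gamma (y + a) := by
  set a' := min a 1 with ha'def
  have ha'1 : 0 < a' := lt_min ha one_pos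
  have ha'2 : a' ≤ 1 := min_le_right _ _
  filter_upwards [Filter.eventually_ge_atTop (max 2 ((2 * c) ^ (a'⁻¹)))] with y hy
  have hy2 : (2:ℝ) ≤ y := le_trans (le_max_left _ _) hy
  have hyc : (2 * c) ^ (a'⁻¹) ≤ y := le_trans (le_max_right _ _) hy
  have hy0 : (0:ℝ) < y := by linarith
  have hΓy : 0 < Real.Gamma y := Real.Gamma_pos_of_pos hy0
  have step1 : Real.Gamma (y + a') ≤ Real.Gamma (y + a) := by
    rcases eq_or_lt_of_le (min_le_left a 1) with h | h
    · rw [ha'def, h]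
    · exact (Real.Gamma_strictMonoOn_Ici (by simp [mem_Ici]; linarith)
        (by simp [mem_Ici]; nlinarith) (by linarith)).le
  have step2 := ml_logconv y a' hy0 ha'1 ha'2
  have hΓ' : 0 < Real.Gamma (y + a') := Real.Gamma_pos_of_pos (by linarith)
  have hp1 : (0:ℝ) < y ^ (1 - a') := Real.rpow_pos_of_pos hy0 _
  have hb1 : (y + a') ^ (1 - a') ≤ (2 * y) ^ (1 - a') :=
    Real.rpow_le_rpow (by positivity) (by linarith) (by linarith)
  have hb2 : ((2:ℝ) * y) ^ (1 - a') = 2 ^ (1 - a') * y ^ (1 - a') :=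
    Real.mul_rpow (by norm_num) hy0.le
  have hb3 : (2:ℝ) ^ (1 - a') ≤ 2 := by
    calc (2:ℝ) ^ (1 - a') ≤ 2 ^ (1:ℝ) :=
          Real.rpow_le_rpow_of_exponent_le (by norm_num) (by linarith)
    _ = 2 := Real.rpow_one 2
  have hyc2 : 2 * c ≤ y ^ a' := by
    calc (2 * c) = ((2 * c) ^ (a'⁻¹)) ^ a' := by
          rw [← Real.rpow_mul (by positivity : (0:ℝ) ≤ 2 * c), inv_mul_cancel₀ ha'1.ne',
            Real.rpow_one]
    _ ≤ y ^ a' := Real.rpow_le_rpow (by positivity) hyc ha'1.le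
  have h2y : (y + a') ^ (1 - a') ≤ 2 * y ^ (1 - a') := by
    rw [hb2] at hb1; nlinarith
  have key : y * Real.Gamma y ≤ Real.Gamma (y + a') * (2 * y ^ (1 - a')) :=
    step2.trans (mul_le_mul_of_nonneg_left h2y hΓ'.le)
  have hsplit : y ^ a' * y ^ (1 - a') = y := by
    rw [← Real.rpow_add hy0]; simp
  have final : c * Real.Gamma y ≤ Real.Gamma (y + a') := by
    nlinarith [mul_le_mul_of_nonneg_right hyc2 (mul_nonneg hp1.le hΓy.le)]
  linarith

lemma ml_summable_aux (a b x : ℝ) (ha : 0 < a) (hb : 0 < b) (hx : 0 ≤ x) :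
    Summable (fun k : ℕ => ((k : ℝ) + 1) * x ^ k / Real.Gamma (a * k + b)) := by
  apply summable_of_ratio_norm_eventually_le (r := 1/2) (by norm_num)
  have htend : Tendsto (fun k : ℕ => a * k + b) atTop atTop := by
    apply Filter.tendsto_atTop_add_const_right
    exact Tendsto.const_mul_atTop ha tendsto_natCast_atTop_atTop
  filter_upwards [htend.eventually (ml_gamma_ratio a (4 * x + 1) ha (by linarith))] with k hk
  have hy0 : (0 : ℝ) < a * k + b := by positivity
  have hG : 0 < Real.Gamma (a * k + b) := Real.Gamma_pos_of_pos hy0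
  have hG' : 0 < Real.Gamma (a * k + b + a) := Real.Gamma_pos_of_pos (by linarith)
  have harg : a * ((k : ℝ) + 1) + b = a * k + b + a := by ring
  push_cast
  rw [harg]
  rw [Real.norm_of_nonneg (by positivity), Real.norm_of_nonneg (by positivity)]
  rw [div_le_iff₀ hG']
  have h1 : 1/2 * (((k:ℝ) + 1) * x ^ k / Real.Gamma (a * k + b)) * ((4 * x + 1) * Real.Gamma (a * k + b))
      ≤ 1/2 * (((k:ℝ) + 1) * x ^ k / Real.Gamma (a * k + b)) * Real.Gamma (a * k + b + a) :=
    mul_le_mul_of_nonneg_left hk (by positivity)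
  have h2 : 1/2 * (((k:ℝ) + 1) * x ^ k / Real.Gamma (a * k + b)) * ((4 * x + 1) * Real.Gamma (a * k + b))
      = 1/2 * ((k:ℝ) + 1) * x ^ k * (4 * x + 1) := by
    field_simp
  rw [h2] at h1
  rw [pow_succ]
  nlinarith [mul_nonneg (mul_nonneg (Nat.cast_nonneg (α := ℝ) k) hx) (pow_nonneg hx k),
    pow_nonneg hx k, mul_nonneg hx (pow_nonneg hx k)]

lemma ml_summable (a b z : ℝ) (ha : 0 < a) (hb : 0 < b) :
    Summable (fun k : ℕ => z ^ k / Real.Gamma (a * k + b)) := by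
  apply Summable.of_norm
  refine Summable.of_nonneg_of_le (fun k => norm_nonneg _) ?_
    (ml_summable_aux a b |z| ha hb (abs_nonneg z))
  intro k
  have hy0 : (0 : ℝ) < a * k + b := by positivity
  have hG : 0 < Real.Gamma (a * k + b) := Real.Gamma_pos_of_pos hy0
  rw [Real.norm_eq_abs, abs_div, abs_of_pos hG, abs_pow]
  gcongr
  nlinarith [pow_nonneg (abs_nonneg z) k, Nat.cast_nonneg (α := ℝ) k]

/-- The two-parameter Mittag-Leffler function `E_{a,b}(z) = ∑_{k=0}^∞ z^k / Γ(a k + b)`. -/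
noncomputable def mittagLeffler (a b z : ℝ) : ℝ := ∑' k : ℕ, z ^ k / Real.Gamma (a * k + b)

/-- For `a > 0`, `b > 1`, `λ ∈ ℝ` and `s > 0`,
`d/ds [ s^{b-1} E_{a,b}(λ s^a) ] = s^{b-2} E_{a,b-1}(λ s^a)`. -/
theorem mittagLeffler_power_hasDerivAt (a b lam : ℝ) (ha : 0 < a) (hb : 1 < b)
    (s : ℝ) (hs : 0 < s) :
    HasDerivAt (fun r : ℝ => r ^ (b - 1) * mittagLeffler a b (lam * r ^ a))
      (s ^ (b - 2) * mittagLeffler a (b - 1) (lam * s ^ a)) s := by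
  set g : ℕ → ℝ → ℝ := fun k r => lam ^ k * r ^ (a * k + b - 1) / Real.Gamma (a * k + b)
    with hgdef
  set g' : ℕ → ℝ → ℝ := fun k r => lam ^ k * r ^ (a * k + b - 2) / Real.Gamma (a * k + b - 1)
    with hg'def
  set C : ℝ := (2 * s) ^ (b - 2) + (s / 2) ^ (b - 2) with hCdef
  set x : ℝ := |lam| * (2 * s) ^ a with hxdef
  set u : ℕ → ℝ := fun k => C * (x ^ k / Real.Gamma (a * k + (b - 1))) with hudef
  have hk1 : ∀ k : ℕ, (0 : ℝ) < a * k + b - 1 := by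
    intro k
    have : (0:ℝ) ≤ a * k := by positivity
    linarith
  have hk2 : ∀ k : ℕ, (0 : ℝ) < Real.Gamma (a * k + b - 1) :=
    fun k => Real.Gamma_pos_of_pos (hk1 k)
  have hk0 : ∀ k : ℕ, (0 : ℝ) < a * k + b := by intro k; have := hk1 k; linarith
  have hk3 : ∀ k : ℕ, Real.Gamma (a * k + b) = (a * k + b - 1) * Real.Gamma (a * k + b - 1) := by
    intro k
    have h := Real.Gamma_add_one (hk1 k).ne'
    rw [show a * (k:ℝ) + b - 1 + 1 = a * k + b by ring] at h
    exact h
  -- summability of the bound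
  have hu : Summable u := (ml_summable a (b - 1) x ha (by linarith)).mul_left C
  -- derivative of each term
  have hg : ∀ (k : ℕ) (r : ℝ), r ∈ Ioo (s / 2) (2 * s) → HasDerivAt (g k) (g' k r) r := by
    intro k r hr
    have hr0 : 0 < r := lt_trans (by linarith) hr.1
    have hd := Real.hasDerivAt_rpow_const (x := r) (p := a * k + b - 1) (Or.inl hr0.ne')
    have hd2 := (hd.const_mul (lam ^ k)).div_const (Real.Gamma (a * k + b))
    convert hd2 using 1
    · rfl
    · rfl
    simp only [hg'def]
    rw [show a * (k:ℝ) + b - 1 - 1 = a * k + b - 2 by ring, hk3 k,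
      show lam ^ k * ((a * (k:ℝ) + b - 1) * r ^ (a * k + b - 2))
        = (a * (k:ℝ) + b - 1) * (lam ^ k * r ^ (a * k + b - 2)) by ring,
      mul_div_mul_left _ _ (hk1 k).ne']
  -- bound on the derivatives
  have hg' : ∀ (k : ℕ) (r : ℝ), r ∈ Ioo (s / 2) (2 * s) → ‖g' k r‖ ≤ u k := by
    intro k r hr
    have hr0 : 0 < r := lt_trans (by linarith) hr.1
    have hr1 : s / 2 ≤ r := hr.1.le
    have hr2 : r ≤ 2 * s := hr.2.le
    have hb1 : r ^ (a * (k:ℝ)) ≤ (2 * s) ^ (a * (k:ℝ)) :=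
      Real.rpow_le_rpow hr0.le hr2 (by positivity)
    have hb2 : r ^ (b - 2) ≤ C := by
      rcases le_or_gt 0 (b - 2) with h | h
      · have : r ^ (b - 2) ≤ (2 * s) ^ (b - 2) := Real.rpow_le_rpow hr0.le hr2 h
        have h2 : (0:ℝ) ≤ (s / 2) ^ (b - 2) := (Real.rpow_pos_of_pos (by linarith) _).le
        rw [hCdef]; linarith
      · have : r ^ (b - 2) ≤ (s / 2) ^ (b - 2) :=
          Real.rpow_le_rpow_of_nonpos (by linarith) hr1 h.le
        have h2 : (0:ℝ) ≤ (2 * s) ^ (b - 2) := (Real.rpow_pos_of_pos (by linarith) _).le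
        rw [hCdef]; linarith
    have hnorm : ‖g' k r‖ = |lam| ^ k * (r ^ (a * (k:ℝ)) * r ^ (b - 2)) / Real.Gamma (a * k + b - 1) := by
      simp only [hg'def]
      rw [Real.norm_eq_abs, abs_div, abs_of_pos (hk2 k), abs_mul, abs_pow,
        abs_of_pos (Real.rpow_pos_of_pos hr0 _),
        show a * (k:ℝ) + b - 2 = a * k + (b - 2) by ring, Real.rpow_add hr0]
    rw [hnorm]
    have hx2 : x ^ k = |lam| ^ k * (2 * s) ^ (a * (k:ℝ)) := by
      rw [hxdef, mul_pow, ← Real.rpow_natCast ((2 * s) ^ a) k,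
        ← Real.rpow_mul (by linarith : (0:ℝ) ≤ 2 * s)]
    have hueq : u k = |lam| ^ k * ((2 * s) ^ (a * (k:ℝ)) * C) / Real.Gamma (a * k + b - 1) := by
      simp only [hudef]
      rw [hx2, show a * (k:ℝ) + (b - 1) = a * k + b - 1 by ring]
      ring
    rw [hueq]
    gcongr
    all_goals first
      | exact hb1
      | exact hb2
      | positivity
      | exact (hk2 k).le
      | exact (Real.rpow_pos_of_pos hr0 _).le
  -- pointwise representation for r > 0
  have hrepr : ∀ r : ℝ, 0 < r →
      r ^ (b - 1) * mittagLeffler a b (lam * r ^ a) = ∑' k, g k r := by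
    intro r hr0
    rw [mittagLeffler, ← tsum_mul_left]
    refine tsum_congr fun k => ?_
    simp only [hgdef]
    rw [mul_pow, ← Real.rpow_natCast (r ^ a) k, ← Real.rpow_mul hr0.le]
    rw [show lam ^ k * r ^ (a * (k:ℝ) + b - 1) = lam ^ k * (r ^ (a * (k:ℝ)) * r ^ (b - 1)) by
      rw [← Real.rpow_add hr0]; ring_nf]
    ring
  -- summability at s
  have hsum0 : Summable fun k => g k s := by
    have : ∀ k : ℕ, g k s = s ^ (b - 1) * ((lam * s ^ a) ^ k / Real.Gamma (a * k + b)) := by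
      intro k
      simp only [hgdef]
      rw [mul_pow, ← Real.rpow_natCast (s ^ a) k, ← Real.rpow_mul hs.le]
      rw [show lam ^ k * s ^ (a * (k:ℝ) + b - 1) = lam ^ k * (s ^ (a * (k:ℝ)) * s ^ (b - 1)) by
        rw [← Real.rpow_add hs]; ring_nf]
      ring
    simp_rw [this]
    exact (ml_summable a b (lam * s ^ a) ha (by linarith)).mul_left _
  have hmem : s ∈ Ioo (s / 2) (2 * s) := ⟨by linarith, by linarith⟩
  have H := hasDerivAt_tsum_of_isPreconnected hu isOpen_Ioo isPreconnected_Ioo hg hg'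
    hmem hsum0 hmem
  have hval : ∑' k, g' k s = s ^ (b - 2) * mittagLeffler a (b - 1) (lam * s ^ a) := by
    rw [mittagLeffler, ← tsum_mul_left]
    refine tsum_congr fun k => ?_
    simp only [hg'def]
    rw [mul_pow, ← Real.rpow_natCast (s ^ a) k, ← Real.rpow_mul hs.le]
    rw [show a * (k:ℝ) + (b - 1) = a * k + b - 1 by ring]
    rw [show lam ^ k * s ^ (a * (k:ℝ) + b - 2) = lam ^ k * (s ^ (a * (k:ℝ)) * s ^ (b - 2)) by
      rw [← Real.rpow_add hs]; ring_nf]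
    ring
  have heq : (fun r : ℝ => r ^ (b - 1) * mittagLeffler a b (lam * r ^ a))
      =ᶠ[nhds s] fun r => ∑' k, g k r := by
    filter_upwards [isOpen_Ioi.mem_nhds (show s ∈ Ioi (0:ℝ) from hs)] with r hr
    exact hrepr r hr
  have H2 := H.congr_of_eventuallyEq heq
  rwa [hval] at H2
end

section
/- Let 1 < β < 2 and μ ∈ ℝ, and define F_{β,δ}(z) = ∑_{j=0}^∞ (j+1) z^j / Γ(β j + δ) for δ > 0. Then for every s > 0: (i) the function s^β F_{β,β+1}(-μ s^β) satisfies (D^β φ)(s) + μ φ(s) = E_{β,1}(-μ s^β); (ii) the function s^{β+1} F_{β,β+2}(-μ s^β) satisfies (D^β φ)(s) + μ φ(s) = s E_{β,2}(-μ s^β); (iii) the function s^{2β} F_{β,2β+1}(-μ s^β) satisfies (D^β φ)(s) + μ φ(s) = s^β E_{β,β+1}(-μ s^β). -/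
open MeasureTheory

/-- The series `F_{β,δ}(z) = ∑_{j=0}^∞ (j+1) z^j / Γ(β j + δ)`. -/
noncomputable def mlF (β δ z : ℝ) : ℝ := ∑' j : ℕ, (j + 1) * z ^ j / Real.Gamma (β * j + δ)

open Real Set Filter

-- summability core lemma
lemma summable_aux {β : ℝ} (hβ : 1 < β) {b : ℝ} (hb : 0 < b) {K : ℝ} (hK : 0 ≤ K) (p : ℕ) :
    Summable fun j : ℕ => (j + 1 : ℝ) ^ p * K ^ j / Real.Gamma (β * j + b) := by
  obtain ⟨N, hN⟩ := exists_nat_ge ((2 - b) / (β - 1))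
  apply Summable.of_norm_bounded_eventually (g := fun j : ℕ => (2 ^ p * K) ^ j / (j.factorial : ℝ))
  · exact Real.summable_pow_div_factorial _
  · rw [Nat.cofinite_eq_atTop]
    filter_upwards [eventually_ge_atTop N] with j hj
    have hβj : (0:ℝ) < β * j + b := by positivity
    have hΓpos : 0 < Real.Gamma (β * j + b) := Real.Gamma_pos_of_pos hβj
    have hjN : ((2 - b) / (β - 1)) ≤ (j:ℝ) := le_trans hN (by exact_mod_cast hj)
    have h2 : (j:ℝ) + 2 ≤ β * j + b := by
      have := (div_le_iff₀ (by linarith : (0:ℝ) < β - 1)).1 hjN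
      nlinarith
    have hmono : Real.Gamma ((j:ℝ) + 2) ≤ Real.Gamma (β * j + b) :=
      Real.Gamma_strictMonoOn_Ici.monotoneOn (by simp only [mem_Ici]; linarith)
        (by simp only [mem_Ici]; linarith) h2
    have hfact : Real.Gamma ((j:ℝ) + 2) = ((j+1).factorial : ℝ) := by
      have := Real.Gamma_nat_eq_factorial (j + 1)
      rw [← this]; norm_num; ring_nf
    have hnorm : ‖(j + 1 : ℝ) ^ p * K ^ j / Real.Gamma (β * j + b)‖
        = (j + 1 : ℝ) ^ p * K ^ j / Real.Gamma (β * j + b) := by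
      rw [Real.norm_eq_abs, abs_of_nonneg]; positivity
    rw [hnorm]
    have hj1 : (j + 1 : ℝ) ^ p ≤ ((2:ℝ) ^ p) ^ j := by
      have h1 : (j + 1 : ℝ) ≤ 2 ^ j := by
        exact_mod_cast Nat.succ_le_of_lt (Nat.lt_two_pow_self (n := j))
      calc (j + 1 : ℝ) ^ p ≤ ((2:ℝ) ^ j) ^ p := pow_le_pow_left₀ (by positivity) h1 p
        _ = ((2:ℝ) ^ p) ^ j := by rw [← pow_mul, ← pow_mul, Nat.mul_comm]
    calc (j + 1 : ℝ) ^ p * K ^ j / Real.Gamma (β * j + b)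
        ≤ ((2:ℝ) ^ p) ^ j * K ^ j / ((j+1).factorial : ℝ) := by
          have hfl : (0:ℝ) < ((j+1).factorial : ℝ) := by positivity
          gcongr
          rw [← hfact]; exact hmono
      _ = ((2:ℝ) ^ p * K) ^ j / ((j+1).factorial : ℝ) := by rw [mul_pow]
      _ ≤ ((2:ℝ) ^ p * K) ^ j / (j.factorial : ℝ) := by
          apply div_le_div_of_nonneg_left (by positivity) (by positivity)
          exact_mod_cast Nat.factorial_le (by omega)

lemma hasDerivAt_series {β : ℝ} (hβ : 1 < β) (a : ℕ → ℝ) (e : ℝ)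
    (hsum : ∀ K : ℝ, 0 ≤ K → Summable fun j : ℕ => |a j| * (j + 1) * K ^ j)
    {z : ℝ} (hz : 0 < z) :
    HasDerivAt (fun y => ∑' j : ℕ, a j * y ^ (β * j + e))
      (∑' j : ℕ, a j * (β * j + e) * z ^ (β * j + e - 1)) z := by
  set t : Set ℝ := Ioo (z/2) (z+1) with ht
  have hzt : z ∈ t := ⟨by linarith, by linarith⟩
  have hz2 : (0:ℝ) < z/2 := by linarith
  set C : ℝ := (β + |e| + 1) * ((z/2) ^ (e-1) + (z+1) ^ (e-1)) with hC
  set K : ℝ := (z+1) ^ β with hK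
  have hKnn : 0 ≤ K := rpow_nonneg (by linarith) β
  have hCnn : 0 ≤ C := by
    apply mul_nonneg (by positivity)
    have := rpow_nonneg hz2.le (e-1)
    have := rpow_nonneg (by linarith : (0:ℝ) ≤ z+1) (e-1)
    linarith
  apply hasDerivAt_tsum_of_isPreconnected
    (u := fun j : ℕ => |a j| * (j + 1) * K ^ j * C)
    (((hsum K hKnn).mul_right C)) isOpen_Ioo (isPreconnected_Ioo) ?_ ?_ hzt ?_ hzt
  · -- HasDerivAt of each term
    intro j y hy
    have hy0 : (0:ℝ) < y := lt_trans hz2 hy.1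
    have := (Real.hasDerivAt_rpow_const (x := y) (p := β * j + e) (Or.inl hy0.ne')).const_mul (a j)
    simpa [mul_assoc] using this
  · -- bound
    intro j y hy
    have hy0 : (0:ℝ) < y := lt_trans hz2 hy.1
    have hyK : y ^ (β * j) ≤ K ^ j := by
      have h1 : y ^ (β * j) ≤ (z+1) ^ (β * j) :=
        rpow_le_rpow hy0.le hy.2.le (by positivity)
      have h2 : ((z+1) : ℝ) ^ (β * (j:ℝ)) = K ^ j := by
        rw [hK, ← Real.rpow_natCast ((z+1) ^ β) j, ← Real.rpow_mul (by linarith)]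
      rw [← h2]; exact h1
    have hye : y ^ (e - 1) ≤ (z/2) ^ (e-1) + (z+1) ^ (e-1) := by
      rcases le_or_gt 0 (e - 1) with h | h
      · have : y ^ (e-1) ≤ (z+1) ^ (e-1) := rpow_le_rpow hy0.le hy.2.le h
        have h0 : (0:ℝ) ≤ (z/2) ^ (e-1) := rpow_nonneg hz2.le _
        linarith
      · have : y ^ (e-1) ≤ (z/2) ^ (e-1) := rpow_le_rpow_of_nonpos hz2 hy.1.le h.le
        have h0 : (0:ℝ) ≤ (z+1) ^ (e-1) := rpow_nonneg (by linarith) _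
        linarith
    have hsplit : y ^ (β * j + e - 1) = y ^ (β * j) * y ^ (e - 1) := by
      rw [← Real.rpow_add hy0]; ring_nf
    have habs : |β * j + e| ≤ (β + |e| + 1) * (j + 1) := by
      have h1 : |β * (j:ℝ) + e| ≤ β * j + |e| := by
        have := abs_add_le (β * (j:ℝ)) e
        rwa [abs_of_nonneg (by positivity : (0:ℝ) ≤ β * (j:ℝ))] at this
      nlinarith [abs_nonneg e, (Nat.cast_nonneg j : (0:ℝ) ≤ j)]
    calc ‖a j * (β * j + e) * y ^ (β * j + e - 1)‖
        = |a j| * |β * j + e| * y ^ (β * j + e - 1) := by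
          rw [norm_mul, norm_mul, Real.norm_eq_abs, Real.norm_eq_abs, Real.norm_eq_abs,
            abs_of_nonneg (rpow_nonneg hy0.le _)]
      _ ≤ |a j| * ((β + |e| + 1) * (j + 1)) * (K ^ j * ((z/2) ^ (e-1) + (z+1) ^ (e-1))) := by
          apply mul_le_mul
          · exact mul_le_mul_of_nonneg_left habs (abs_nonneg _)
          · rw [hsplit]
            exact mul_le_mul hyK hye (rpow_nonneg hy0.le _) (by positivity)
          · exact rpow_nonneg hy0.le _
          · positivity
      _ = |a j| * (j + 1) * K ^ j * C := by rw [hC]; ring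
  · -- summable at z
    apply Summable.of_norm_bounded (g := fun j : ℕ => |a j| * (j + 1) * K ^ j * (z ^ e))
    · exact (hsum K hKnn).mul_right _
    · intro j
      have hz0 : (0:ℝ) < z := hz
      have : ‖a j * z ^ (β * j + e)‖ = |a j| * (z ^ (β * j) * z ^ e) := by
        rw [norm_mul, Real.norm_eq_abs, Real.norm_eq_abs,
          abs_of_nonneg (rpow_nonneg hz0.le _), Real.rpow_add hz0]
      rw [this]
      have hzK : z ^ (β * (j:ℝ)) ≤ K ^ j := by
        have h1 : z ^ (β * (j:ℝ)) ≤ (z+1) ^ (β * (j:ℝ)) :=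
          rpow_le_rpow hz0.le (by linarith) (by positivity)
        have h2 : ((z+1) : ℝ) ^ (β * (j:ℝ)) = K ^ j := by
          rw [hK, ← Real.rpow_natCast ((z+1) ^ β) j, ← Real.rpow_mul (by linarith)]
        rw [← h2]; exact h1
      calc |a j| * (z ^ (β * (j:ℝ)) * z ^ e) ≤ |a j| * (K ^ j * z ^ e) := by
            apply mul_le_mul_of_nonneg_left _ (abs_nonneg _)
            exact mul_le_mul_of_nonneg_right hzK (rpow_nonneg hz0.le _)
        _ ≤ |a j| * (j+1) * K ^ j * z ^ e := by
            have h2 : |a j| * (K^j * z^e) = |a j| * K^j * z^e := by ring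
            rw [h2]
            have h3 : |a j| ≤ |a j| * (j+1) := by
              nlinarith [abs_nonneg (a j), (Nat.cast_nonneg j : (0:ℝ) ≤ j)]
            exact mul_le_mul_of_nonneg_right
              (mul_le_mul_of_nonneg_right h3 (pow_nonneg hKnn j)) (rpow_nonneg hz0.le e)

lemma beta_ofReal {p q x : ℝ} (hx0 : 0 ≤ x) (hx1 : x ≤ 1) :
    (x:ℂ) ^ (p:ℂ) * (1 - (x:ℂ)) ^ (q:ℂ) = ((x ^ p * (1-x) ^ q : ℝ) : ℂ) := by
  rw [← Complex.ofReal_cpow hx0, ← Complex.ofReal_one, ← Complex.ofReal_sub,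
    ← Complex.ofReal_cpow (by linarith), ← Complex.ofReal_mul]

lemma betaIntegrable {p q : ℝ} (hp : -1 < p) (hq : -1 < q) :
    IntegrableOn (fun x : ℝ => x ^ p * (1-x) ^ q) (Ioc 0 1) := by
  have hc : IntervalIntegrable (fun x : ℝ => (x:ℂ) ^ (p:ℂ) * (1-(x:ℂ)) ^ (q:ℂ)) volume 0 1 := by
    have h := Complex.betaIntegral_convergent (u := (p+1:ℂ)) (v := (q+1:ℂ))
      (by simp; linarith) (by simp; linarith)
    have : ∀ x : ℝ, (x:ℂ) ^ ((p+1:ℂ) - 1) * (1-(x:ℂ)) ^ ((q+1:ℂ) - 1)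
        = (x:ℂ) ^ (p:ℂ) * (1-(x:ℂ)) ^ (q:ℂ) := by
      intro x; norm_num
    simpa [this] using h
  have hnorm := hc.norm
  rw [intervalIntegrable_iff, uIoc_of_le (by norm_num : (0:ℝ) ≤ 1)] at hnorm
  apply hnorm.congr
  apply (ae_restrict_iff' measurableSet_Ioc).2
  filter_upwards with x hx
  rw [beta_ofReal hx.1.le hx.2, Complex.norm_real, Real.norm_eq_abs, abs_of_nonneg]
  exact mul_nonneg (rpow_nonneg hx.1.le _) (rpow_nonneg (by linarith [hx.2] : (0:ℝ) ≤ 1 - x) _)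

lemma betaValue {p q : ℝ} (hp : -1 < p) (hq : -1 < q) :
    ∫ x in Ioc (0:ℝ) 1, x ^ p * (1-x) ^ q
      = Real.Gamma (p+1) * Real.Gamma (q+1) / Real.Gamma (p+q+2) := by
  have key := Complex.Gamma_mul_Gamma_eq_betaIntegral (s := (p+1:ℂ)) (t := (q+1:ℂ))
    (by simp; linarith) (by simp; linarith)
  have hbi : Complex.betaIntegral (p+1) (q+1) = ((∫ x in (0:ℝ)..1, x ^ p * (1-x) ^ q : ℝ) : ℂ) := by
    rw [Complex.betaIntegral]
    rw [← intervalIntegral.integral_ofReal]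
    apply intervalIntegral.integral_congr
    intro x hx
    rw [uIcc_of_le (by norm_num : (0:ℝ) ≤ 1)] at hx
    have : (x:ℂ) ^ ((p+1:ℂ) - 1) * (1-(x:ℂ)) ^ ((q+1:ℂ) - 1)
        = (x:ℂ) ^ (p:ℂ) * (1-(x:ℂ)) ^ (q:ℂ) := by norm_num
    dsimp only
    rw [this, beta_ofReal hx.1 hx.2]
  rw [hbi] at key
  have hcast : ((p:ℂ)+1) + ((q:ℂ)+1) = ((p+q+2 : ℝ) : ℂ) := by push_cast; ring
  rw [hcast] at key
  have hre : Real.Gamma (p+1) * Real.Gamma (q+1)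
      = Real.Gamma (p+q+2) * ∫ x in (0:ℝ)..1, x ^ p * (1-x) ^ q := by
    have h1 : ((p:ℂ)+1) = ((p+1:ℝ):ℂ) := by push_cast; ring
    have h2 : ((q:ℂ)+1) = ((q+1:ℝ):ℂ) := by push_cast; ring
    rw [h1, h2, Complex.Gamma_ofReal, Complex.Gamma_ofReal, Complex.Gamma_ofReal] at key
    exact_mod_cast key
  have hΓ : 0 < Real.Gamma (p+q+2) := Real.Gamma_pos_of_pos (by linarith)
  rw [← intervalIntegral.integral_of_le (by norm_num : (0:ℝ) ≤ 1)]
  field_simp at hre ⊢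
  linarith [hre]

lemma betaIntegrable' {p q s : ℝ} (hp : -1 < p) (hq : -1 < q) (hs : 0 < s) :
    IntegrableOn (fun z : ℝ => z ^ p * (s-z) ^ q) (Ioc 0 s) := by
  have h0 := betaIntegrable hp hq
  have h1 : IntervalIntegrable (fun x : ℝ => x ^ p * (1-x) ^ q) volume 0 1 := by
    rw [intervalIntegrable_iff, uIoc_of_le (by norm_num : (0:ℝ) ≤ 1)]; exact h0
  have h2 := (h1.comp_mul_left (c := s⁻¹))
  simp only [zero_div, one_div, inv_inv] at h2
  rw [intervalIntegrable_iff, uIoc_of_le hs.le] at h2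
  apply (h2.mul_const (s ^ (p+q))).congr
  apply (ae_restrict_iff' measurableSet_Ioc).2
  filter_upwards with z hz
  have hz0 : 0 ≤ z := hz.1.le
  have hzs : 0 ≤ s - z := by linarith [hz.2]
  have e1 : s⁻¹ * z = z / s := by ring
  have e2 : (1 - s⁻¹*z) = (s - z)/s := by field_simp
  show (s⁻¹*z) ^ p * (1-s⁻¹*z) ^ q * s ^ (p+q) = z ^ p * (s-z) ^ q
  rw [e2, e1, Real.div_rpow hz0 hs.le, Real.div_rpow hzs hs.le, Real.rpow_add hs]
  have hsp := (Real.rpow_pos_of_pos hs p).ne'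
  have hsq := (Real.rpow_pos_of_pos hs q).ne'
  field_simp



lemma betaValue' {p q s : ℝ} (hp : -1 < p) (hq : -1 < q) (hs : 0 < s) :
    ∫ z in Ioc (0:ℝ) s, z ^ p * (s-z) ^ q
      = s ^ (p+q+1) * (Real.Gamma (p+1) * Real.Gamma (q+1) / Real.Gamma (p+q+2)) := by
  have key := intervalIntegral.integral_comp_mul_left
    (a := (0:ℝ)) (b := 1) (c := s) (fun z : ℝ => z ^ p * (s-z) ^ q) hs.ne'
  simp only [mul_zero, mul_one, smul_eq_mul] at key
  have h1 : (∫ x in (0:ℝ)..1, (s*x) ^ p * (s - s*x) ^ q)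
      = s ^ (p+q) * ∫ x in (0:ℝ)..1, x ^ p * (1-x) ^ q := by
    rw [← intervalIntegral.integral_const_mul]
    apply intervalIntegral.integral_congr
    intro x hx
    rw [uIcc_of_le (by norm_num : (0:ℝ) ≤ 1)] at hx
    have hx0 : 0 ≤ x := hx.1
    have hx1 : 0 ≤ 1 - x := by linarith [hx.2]
    show (s*x) ^ p * (s - s*x) ^ q = s ^ (p+q) * (x ^ p * (1-x) ^ q)
    have e : s - s*x = s * (1-x) := by ring
    rw [e, Real.mul_rpow hs.le hx0, Real.mul_rpow hs.le hx1, Real.rpow_add hs]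
    ring
  rw [h1] at key
  have h2 : (∫ z in (0:ℝ)..s, z ^ p * (s-z) ^ q) = ∫ z in Ioc (0:ℝ) s, z ^ p * (s-z) ^ q :=
    intervalIntegral.integral_of_le hs.le
  have h3 : (∫ x in (0:ℝ)..1, x ^ p * (1-x) ^ q)
      = Real.Gamma (p+1) * Real.Gamma (q+1) / Real.Gamma (p+q+2) := by
    rw [intervalIntegral.integral_of_le (by norm_num : (0:ℝ) ≤ 1)]
    exact betaValue hp hq
  rw [h2, h3] at key
  rw [Real.rpow_add hs, Real.rpow_one]
  have hsne : s ≠ 0 := hs.ne'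
  field_simp at key ⊢
  rw [← key]

lemma caputo_master {β μ γ : ℝ} (hβ1 : 1 < β) (hβ2 : β < 2) (hγ : 1 < γ)
    (φ : ℝ → ℝ)
    (hφ : ∀ y : ℝ, 0 < y →
      φ y = ∑' j : ℕ, (((j:ℝ)+1) * (-μ)^j / Real.Gamma (β*j+γ+1)) * y ^ (β*j+γ))
    {s : ℝ} (hs : 0 < s) :
    (1 / Real.Gamma (2-β)) * (∫ z in (0:ℝ)..s, deriv (deriv φ) z * (s-z)^(1-β))
      = ∑' j : ℕ, (((j:ℝ)+1) * (-μ)^j / Real.Gamma (β*j+(γ-β)+1)) * s ^ (β*j+(γ-β)) := by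
  set c : ℕ → ℝ := fun j => ((j:ℝ)+1) * (-μ)^j / Real.Gamma (β*j+γ+1) with hc
  set a1 : ℕ → ℝ := fun j => c j * (β*j+γ) with ha1
  set a2 : ℕ → ℝ := fun j => a1 j * (β*j+(γ-1)) with ha2
  have hΓc : ∀ j : ℕ, 0 < Real.Gamma (β*j+γ+1) := fun j =>
    Real.Gamma_pos_of_pos (by positivity)
  have habs_c : ∀ j : ℕ, |c j| = ((j:ℝ)+1) * |μ|^j / Real.Gamma (β*j+γ+1) := by
    intro j
    rw [hc, abs_div, abs_mul, abs_pow, abs_neg,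
      abs_of_nonneg (by positivity : (0:ℝ) ≤ (j:ℝ)+1), abs_of_pos (hΓc j)]
  have hγ1 : (0:ℝ) < γ + 1 := by linarith
  have hsum_c : ∀ K : ℝ, 0 ≤ K → Summable fun j : ℕ => |c j| * (j + 1) * K ^ j := by
    intro K hK
    have hg := summable_aux hβ1 hγ1 (mul_nonneg (abs_nonneg μ) hK) 3
    refine Summable.of_nonneg_of_le
      (fun j => mul_nonneg (mul_nonneg (abs_nonneg _) (by positivity)) (pow_nonneg hK j))
      ?_ hg
    · intro j
      have h1 : β*(j:ℝ)+(γ+1) = β*j+γ+1 := by ring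
      have hΓ := hΓc j
      rw [habs_c, h1, mul_pow]
      rw [div_mul_eq_mul_div, div_mul_eq_mul_div]
      apply div_le_div_of_nonneg_right ?_ hΓ.le
      have h2 : ((j:ℝ)+1) * |μ|^j * ((j:ℝ)+1) * K^j = ((j:ℝ)+1)^2 * (|μ|^j * K^j) := by ring
      rw [h2]
      have h3 : ((j:ℝ)+1)^2 ≤ ((j:ℝ)+1)^3 := by
        apply pow_le_pow_right₀ (by simp [Nat.cast_nonneg]) (by norm_num)
      exact mul_le_mul_of_nonneg_right h3 (by positivity)

  have hβ0 : (0:ℝ) < β := by linarith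
  have hβγ : ∀ j : ℕ, (0:ℝ) < β*j+γ := by
    intro j; have := mul_nonneg hβ0.le (Nat.cast_nonneg (α:=ℝ) j); linarith
  have hβγ1 : ∀ j : ℕ, (0:ℝ) < β*j+(γ-1) := by
    intro j; have := mul_nonneg hβ0.le (Nat.cast_nonneg (α:=ℝ) j); linarith
  have hβγ3 : ∀ j : ℕ, (0:ℝ) < β*j+(γ-β)+1 := by
    intro j; have := mul_nonneg hβ0.le (Nat.cast_nonneg (α:=ℝ) j); linarith
  have hba1 : ∀ j : ℕ, |a1 j| = |c j| * (β*j+γ) := by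
    intro j; rw [ha1]; dsimp only; rw [abs_mul, abs_of_pos (hβγ j)]
  have hsum_a1 : ∀ K : ℝ, 0 ≤ K → Summable fun j : ℕ => |a1 j| * (j + 1) * K ^ j := by
    intro K hK
    have hg := (summable_aux hβ1 hγ1 (mul_nonneg (abs_nonneg μ) hK) 3).mul_left (β+γ)
    refine Summable.of_nonneg_of_le
      (fun j => mul_nonneg (mul_nonneg (abs_nonneg _) (by positivity)) (pow_nonneg hK j))
      (fun j => ?_) hg
    rw [hba1 j, habs_c j]
    have hΓ := hΓc j
    have hlin : β*(j:ℝ)+γ ≤ (β+γ)*((j:ℝ)+1) := by nlinarith [Nat.cast_nonneg (α:=ℝ) j]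
    have h1 : β*(j:ℝ)+(γ+1) = β*j+γ+1 := by ring
    rw [h1, mul_pow]
    rw [div_mul_eq_mul_div, div_mul_eq_mul_div, div_mul_eq_mul_div, ← mul_div_assoc]
    apply div_le_div_of_nonneg_right ?_ hΓ.le
    calc ((j:ℝ)+1) * |μ|^j * (β*j+γ) * ((j:ℝ)+1) * K^j
        = (((j:ℝ)+1)^2 * (|μ|^j * K^j)) * (β*j+γ) := by ring
      _ ≤ (((j:ℝ)+1)^2 * (|μ|^j * K^j)) * ((β+γ)*((j:ℝ)+1)) :=
          mul_le_mul_of_nonneg_left hlin (by positivity)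
      _ = (β+γ) * (((j:ℝ)+1)^3 * (|μ|^j * K^j)) := by ring
  -- first derivative
  have hd1 : ∀ z : ℝ, 0 < z → HasDerivAt (fun y => ∑' j : ℕ, c j * y ^ (β*j+γ))
      (∑' j : ℕ, c j * (β*j+γ) * z ^ (β*j+γ-1)) z :=
    fun z hz => hasDerivAt_series hβ1 c γ hsum_c hz
  have hderiv1 : ∀ z : ℝ, 0 < z → deriv φ z = ∑' j : ℕ, a1 j * z ^ (β*j+(γ-1)) := by
    intro z hz
    have hev : φ =ᶠ[nhds z] (fun y => ∑' j : ℕ, c j * y ^ (β*j+γ)) :=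
      Filter.eventuallyEq_of_mem (Ioi_mem_nhds hz) (fun y hy => hφ y hy)
    rw [hev.deriv_eq, (hd1 z hz).deriv]
    refine tsum_congr fun j => ?_
    rw [ha1]; dsimp only
    rw [show β*(j:ℝ)+γ-1 = β*j+(γ-1) by ring]
  have hd2 : ∀ z : ℝ, 0 < z →
      HasDerivAt (fun y => ∑' j : ℕ, a1 j * y ^ (β*j+(γ-1)))
        (∑' j : ℕ, a1 j * (β*j+(γ-1)) * z ^ (β*j+(γ-1)-1)) z :=
    fun z hz => hasDerivAt_series hβ1 a1 (γ-1) hsum_a1 hz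
  have hderiv2 : ∀ z : ℝ, 0 < z → deriv (deriv φ) z = ∑' j : ℕ, a2 j * z ^ (β*j+(γ-2)) := by
    intro z hz
    have hev : deriv φ =ᶠ[nhds z] (fun y => ∑' j : ℕ, a1 j * y ^ (β*j+(γ-1))) :=
      Filter.eventuallyEq_of_mem (Ioi_mem_nhds hz) (fun y hy => hderiv1 y hy)
    rw [hev.deriv_eq, (hd2 z hz).deriv]
    refine tsum_congr fun j => ?_
    rw [ha2]; dsimp only
    rw [show β*(j:ℝ)+(γ-1)-1 = β*j+(γ-2) by ring]
  -- integral
  have h2β : (-1:ℝ) < 1 - β := by linarith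
  have hpj : ∀ j : ℕ, (-1:ℝ) < β*j+(γ-2) := by
    intro j; have := mul_nonneg hβ0.le (Nat.cast_nonneg (α:=ℝ) j); linarith
  have hInt : ∀ j : ℕ, IntegrableOn
      (fun z : ℝ => a2 j * (z ^ (β*j+(γ-2)) * (s-z) ^ (1-β))) (Ioc 0 s) :=
    fun j => (betaIntegrable' (hpj j) h2β hs).const_mul (a2 j)
  have hBval : ∀ j : ℕ, (∫ z in Ioc (0:ℝ) s, z ^ (β*j+(γ-2)) * (s-z) ^ (1-β))
      = s ^ (β*j+(γ-β)) * (Real.Gamma (β*j+(γ-1)) * Real.Gamma (2-β)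
          / Real.Gamma (β*j+(γ-β)+1)) := by
    intro j
    have h := betaValue' (hpj j) h2β hs
    rw [show β*(j:ℝ)+(γ-2)+(1-β)+1 = β*j+(γ-β) by ring,
        show β*(j:ℝ)+(γ-2)+1 = β*j+(γ-1) by ring,
        show (1-β)+1 = 2-β by ring,
        show β*(j:ℝ)+(γ-2)+(1-β)+2 = β*j+(γ-β)+1 by ring] at h
    exact h
  have hΓid : ∀ j : ℕ, Real.Gamma (β*j+γ+1)
      = (β*j+γ) * ((β*j+(γ-1)) * Real.Gamma (β*j+(γ-1))) := by
    intro j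
    have h1 : Real.Gamma (β*j+γ+1) = (β*j+γ) * Real.Gamma (β*j+γ) := by
      rw [show β*(j:ℝ)+γ+1 = (β*j+γ)+1 by ring, Real.Gamma_add_one (hβγ j).ne']
    have h2 : Real.Gamma (β*(j:ℝ)+γ) = (β*j+(γ-1)) * Real.Gamma (β*j+(γ-1)) := by
      rw [show β*(j:ℝ)+γ = (β*j+(γ-1))+1 by ring, Real.Gamma_add_one (hβγ1 j).ne']
    rw [h1, h2]
  have hprod : ∀ j : ℕ, a2 j * (s ^ (β*j+(γ-β)) * (Real.Gamma (β*j+(γ-1)) * Real.Gamma (2-β)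
          / Real.Gamma (β*j+(γ-β)+1)))
      = Real.Gamma (2-β) * ((((j:ℝ)+1) * (-μ)^j / Real.Gamma (β*j+(γ-β)+1))
          * s ^ (β*j+(γ-β))) := by
    intro j
    rw [ha2, ha1, hc]; dsimp only
    rw [hΓid j]
    have hΓ1 := Real.Gamma_pos_of_pos (hβγ1 j)
    have hΓ3 := Real.Gamma_pos_of_pos (hβγ3 j)
    have h1 := (hβγ j).ne'
    have h2 := (hβγ1 j).ne'
    field_simp
    rw [mul_comm (j:ℝ) β, div_eq_div_iff ((mul_pos (mul_pos (hβγ1 j) hΓ1) hΓ3).ne') hΓ3.ne']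
    ring
  have hterm : ∀ j : ℕ, (∫ z in Ioc (0:ℝ) s, a2 j * (z ^ (β*j+(γ-2)) * (s-z) ^ (1-β)))
      = Real.Gamma (2-β) * ((((j:ℝ)+1) * (-μ)^j / Real.Gamma (β*j+(γ-β)+1))
          * s ^ (β*j+(γ-β))) := by
    intro j
    rw [MeasureTheory.integral_const_mul, hBval j, hprod j]
  -- summability of integrals of norms
  have hsE : ∀ j : ℕ, s ^ (β*(j:ℝ)+(γ-β)) = (s ^ β)^j * s^(γ-β) := by
    intro j
    rw [Real.rpow_add hs]
    congr 1
    rw [← Real.rpow_natCast (s^β) j, ← Real.rpow_mul hs.le]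
  have hγβ1 : (0:ℝ) < γ-β+1 := by linarith
  have hΓ2β : (0:ℝ) < Real.Gamma (2-β) := Real.Gamma_pos_of_pos (by linarith)
  have hnorms : Summable fun j : ℕ =>
      ∫ z in Ioc (0:ℝ) s, ‖a2 j * (z ^ (β*j+(γ-2)) * (s-z) ^ (1-β))‖ := by
    have hnormval : ∀ j : ℕ, (∫ z in Ioc (0:ℝ) s, ‖a2 j * (z ^ (β*j+(γ-2)) * (s-z) ^ (1-β))‖)
        = |a2 j| * (s ^ (β*j+(γ-β)) * (Real.Gamma (β*j+(γ-1)) * Real.Gamma (2-β)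
            / Real.Gamma (β*j+(γ-β)+1))) := by
      intro j
      rw [← hBval j, ← MeasureTheory.integral_const_mul]
      apply setIntegral_congr_fun measurableSet_Ioc
      intro z hz
      have hz0 : (0:ℝ) ≤ z := hz.1.le
      have hzs : (0:ℝ) ≤ s - z := by linarith [hz.2]
      show ‖a2 j * (z ^ (β*j+(γ-2)) * (s-z) ^ (1-β))‖ = _
      rw [norm_mul, Real.norm_eq_abs, Real.norm_eq_abs,
        abs_of_nonneg (mul_nonneg (rpow_nonneg hz0 _) (rpow_nonneg hzs _))]
    have hg := ((summable_aux hβ1 hγβ1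
        (mul_nonneg (abs_nonneg μ) (rpow_nonneg hs.le β)) 3).mul_left
        (Real.Gamma (2-β) * s^(γ-β)))
    refine Summable.of_nonneg_of_le
      (fun j => integral_nonneg fun z => norm_nonneg _) (fun j => ?_) hg
    rw [hnormval j]
    have habs2 : |a2 j| * (s ^ (β*j+(γ-β)) * (Real.Gamma (β*j+(γ-1)) * Real.Gamma (2-β)
            / Real.Gamma (β*j+(γ-β)+1)))
        = Real.Gamma (2-β) * ((((j:ℝ)+1) * |μ|^j / Real.Gamma (β*j+(γ-β)+1))
            * s ^ (β*j+(γ-β))) := by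
      have hBnn : (0:ℝ) ≤ s ^ (β*j+(γ-β)) * (Real.Gamma (β*j+(γ-1)) * Real.Gamma (2-β)
            / Real.Gamma (β*j+(γ-β)+1)) := by
        have := Real.Gamma_pos_of_pos (hβγ1 j)
        have := Real.Gamma_pos_of_pos (hβγ3 j)
        positivity
      rw [← abs_of_nonneg hBnn, ← abs_mul, hprod j]
      rw [abs_mul, abs_of_pos hΓ2β, abs_mul, abs_div, abs_mul, abs_pow, abs_neg,
        abs_of_nonneg (by positivity : (0:ℝ) ≤ (j:ℝ)+1),
        abs_of_pos (Real.Gamma_pos_of_pos (hβγ3 j)),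
        abs_of_nonneg (rpow_nonneg hs.le _)]
    rw [habs2]
    have hΓ3 := Real.Gamma_pos_of_pos (hβγ3 j)
    rw [hsE j]
    rw [show β*(j:ℝ)+(γ-β)+1 = β*j+(γ-β+1) by ring]
    have hΓ4 := Real.Gamma_pos_of_pos (show (0:ℝ) < β*j+(γ-β+1) by
      have := mul_nonneg hβ0.le (Nat.cast_nonneg (α:=ℝ) j); linarith)
    rw [mul_pow]
    have hle : (((j:ℝ)+1) * (|μ|^j * (s^β)^j) / Real.Gamma (β*j+(γ-β+1)))
        ≤ (((j:ℝ)+1)^3 * (|μ|^j * (s^β)^j) / Real.Gamma (β*j+(γ-β+1))) := by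
      apply div_le_div_of_nonneg_right ?_ hΓ4.le
      apply mul_le_mul_of_nonneg_right ?_ (by positivity)
      calc ((j:ℝ)+1) = ((j:ℝ)+1)^1 := (pow_one _).symm
        _ ≤ ((j:ℝ)+1)^3 := pow_le_pow_right₀ (by simp [Nat.cast_nonneg]) (by norm_num)
    calc Real.Gamma (2-β) * ((((j:ℝ)+1) * |μ|^j / Real.Gamma (β*j+(γ-β+1)))
            * ((s^β)^j * s^(γ-β)))
        = Real.Gamma (2-β) * s^(γ-β) * (((j:ℝ)+1) * (|μ|^j * (s^β)^j)
            / Real.Gamma (β*j+(γ-β+1))) := by ring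
      _ ≤ Real.Gamma (2-β) * s^(γ-β) * (((j:ℝ)+1)^3 * (|μ|^j * (s^β)^j)
            / Real.Gamma (β*j+(γ-β+1))) := by
          apply mul_le_mul_of_nonneg_left hle
          positivity
  -- put everything together
  have hIcongr : (∫ z in (0:ℝ)..s, deriv (deriv φ) z * (s-z)^(1-β))
      = ∫ z in Ioc (0:ℝ) s, ∑' j : ℕ, a2 j * (z ^ (β*j+(γ-2)) * (s-z) ^ (1-β)) := by
    rw [intervalIntegral.integral_of_le hs.le]
    apply setIntegral_congr_fun measurableSet_Ioc
    intro z hz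
    show deriv (deriv φ) z * (s-z) ^ (1-β) = _
    rw [hderiv2 z hz.1, ← tsum_mul_right]
    exact tsum_congr fun j => by ring
  have hswap := integral_tsum_of_summable_integral_norm hInt hnorms
  rw [hIcongr, ← hswap]
  rw [tsum_congr hterm, tsum_mul_left, ← mul_assoc, one_div,
    inv_mul_cancel₀ hΓ2β.ne', one_mul]




lemma tsum_combine {β δ x : ℝ} (hβ : 1 < β) (hδ : 0 < δ) :
    (∑' j : ℕ, ((j:ℝ)+1) * x^j / Real.Gamma (β*j+δ))
      - (∑' j : ℕ, ((j:ℝ)+1) * x^(j+1) / Real.Gamma (β*(j+1)+δ))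
      = mittagLeffler β δ x := by
  have hΓ : ∀ k : ℕ, 0 < Real.Gamma (β*k+δ) := by
    intro k
    apply Real.Gamma_pos_of_pos
    have := mul_nonneg (by linarith : (0:ℝ) ≤ β) (Nat.cast_nonneg (α:=ℝ) k)
    linarith
  have hbound : ∀ (u : ℕ → ℝ), (∀ k, |u k| ≤ ((k:ℝ)+1)) →
      Summable fun k : ℕ => u k * x^k / Real.Gamma (β*k+δ) := by
    intro u hu
    apply Summable.of_norm_bounded (g := fun k : ℕ => ((k:ℝ)+1)^3 * |x|^k / Real.Gamma (β*k+δ))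
      (summable_aux hβ hδ (abs_nonneg x) 3)
    intro k
    rw [Real.norm_eq_abs, abs_div, abs_mul, abs_pow, abs_of_pos (hΓ k)]
    apply div_le_div_of_nonneg_right ?_ (hΓ k).le
    have h1 : ((k:ℝ)+1) ≤ ((k:ℝ)+1)^3 := by
      calc ((k:ℝ)+1) = ((k:ℝ)+1)^1 := (pow_one _).symm
        _ ≤ ((k:ℝ)+1)^3 := pow_le_pow_right₀ (by simp [Nat.cast_nonneg]) (by norm_num)
    exact mul_le_mul (le_trans (hu k) h1) le_rfl (by positivity) (by positivity)
  have hS1 : Summable fun j : ℕ => ((j:ℝ)+1) * x^j / Real.Gamma (β*j+δ) :=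
    hbound _ (fun k => by rw [abs_of_nonneg (by positivity : (0:ℝ) ≤ (k:ℝ)+1)])
  have hSh : Summable fun k : ℕ => (k:ℝ) * x^k / Real.Gamma (β*k+δ) :=
    hbound _ (fun k => by rw [abs_of_nonneg (Nat.cast_nonneg k)]; linarith)
  have hSE : Summable fun k : ℕ => x^k / Real.Gamma (β*k+δ) := by
    have := hbound (fun _ => 1) (fun k => by rw [abs_one]; linarith [Nat.cast_nonneg (α:=ℝ) k])
    simpa using this
  have hshift : (∑' j : ℕ, ((j:ℝ)+1) * x^(j+1) / Real.Gamma (β*(j+1)+δ))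
      = ∑' k : ℕ, (k:ℝ) * x^k / Real.Gamma (β*k+δ) := by
    rw [hSh.tsum_eq_zero_add]
    push_cast
    simp
  rw [hshift, ← hS1.tsum_sub hSh]
  rw [mittagLeffler]
  refine tsum_congr fun j => ?_
  rw [div_sub_div_same, show ((j:ℝ)+1)*x^j - (j:ℝ)*x^j = x^j from by ring]

lemma assemble {β μ γ : ℝ} (hβ1 : 1 < β) (hβ2 : β < 2) (hγ : 1 < γ)
    (φ : ℝ → ℝ) (hφ : ∀ y : ℝ, φ y = y ^ γ * mlF β (γ+1) (-μ * y ^ β))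
    {s : ℝ} (hs : 0 < s) :
    (1 / Real.Gamma (2-β)) * (∫ z in (0:ℝ)..s, deriv (deriv φ) z * (s-z)^(1-β)) + μ * φ s
      = s ^ (γ-β) * mittagLeffler β (γ-β+1) (-μ * s ^ β) := by
  set x : ℝ := -μ * s ^ β with hx
  have hsβ : ∀ y : ℝ, 0 < y → ∀ j : ℕ, y ^ (β*(j:ℝ)) = (y ^ β)^j := by
    intro y hy j
    rw [← Real.rpow_natCast (y^β) j, ← Real.rpow_mul hy.le]
  have hφ' : ∀ y : ℝ, 0 < y →
      φ y = ∑' j : ℕ, (((j:ℝ)+1) * (-μ)^j / Real.Gamma (β*j+γ+1)) * y ^ (β*j+γ) := by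
    intro y hy
    rw [hφ y, mlF, ← tsum_mul_left]
    refine tsum_congr fun j => ?_
    rw [show β*(j:ℝ)+(γ+1) = β*j+γ+1 from by ring]
    rw [mul_pow, show β*(j:ℝ)+γ = γ + β*j from by ring, Real.rpow_add hy, hsβ y hy j]
    ring
  have hmaster := caputo_master hβ1 hβ2 hγ φ hφ' hs
  rw [hmaster]
  have hδ : (0:ℝ) < γ-β+1 := by linarith
  have hD : (∑' j : ℕ, (((j:ℝ)+1) * (-μ)^j / Real.Gamma (β*j+(γ-β)+1)) * s ^ (β*j+(γ-β)))
      = s ^ (γ-β) * ∑' j : ℕ, ((j:ℝ)+1) * x^j / Real.Gamma (β*j+(γ-β+1)) := by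
    rw [← tsum_mul_left]
    refine tsum_congr fun j => ?_
    rw [show β*(j:ℝ)+(γ-β)+1 = β*j+(γ-β+1) from by ring,
      show β*(j:ℝ)+(γ-β) = (γ-β) + β*j from by ring, Real.rpow_add hs, hsβ s hs j,
      hx, mul_pow]
    ring
  have hμ : μ * φ s
      = -(s ^ (γ-β) * ∑' j : ℕ, ((j:ℝ)+1) * x^(j+1) / Real.Gamma (β*(j+1)+(γ-β+1))) := by
    rw [hφ s, mlF, ← tsum_mul_left, ← tsum_mul_left, ← tsum_mul_left, ← tsum_neg]
    refine tsum_congr fun j => ?_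
    rw [show β*((j:ℝ)+1)+(γ-β+1) = β*j+(γ+1) from by ring]
    rw [mul_pow, pow_succ x, hx]
    have h1 : s ^ γ = s ^ (γ-β) * s ^ β := by
      rw [← Real.rpow_add hs]; ring_nf
    rw [h1, mul_pow]
    ring
  rw [hD, hμ]
  have hcomb := tsum_combine (x := x) hβ1 hδ
  have : s ^ (γ-β) * (∑' j : ℕ, ((j:ℝ)+1) * x^j / Real.Gamma (β*j+(γ-β+1)))
      - s ^ (γ-β) * (∑' j : ℕ, ((j:ℝ)+1) * x^(j+1) / Real.Gamma (β*(j+1)+(γ-β+1)))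
      = s ^ (γ-β) * mittagLeffler β (γ-β+1) x := by
    rw [← mul_sub, hcomb]
  linarith [this]

/-- For `1 < β < 2` and `μ ∈ ℝ`, with `D^β` the Caputo derivative of order `β`:
(i) `φ₁(s) = s^β F_{β,β+1}(-μ s^β)` satisfies `(D^β φ₁)(s) + μ φ₁(s) = E_{β,1}(-μ s^β)`;
(ii) `φ₂(s) = s^{β+1} F_{β,β+2}(-μ s^β)` satisfies `(D^β φ₂)(s) + μ φ₂(s) = s E_{β,2}(-μ s^β)`;
(iii) `φ₃(s) = s^{2β} F_{β,2β+1}(-μ s^β)` satisfies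
`(D^β φ₃)(s) + μ φ₃(s) = s^β E_{β,β+1}(-μ s^β)`, for every `s > 0`. -/
theorem caputo_ode_for_mlF_hyperbolic (β μ : ℝ) (hβ1 : 1 < β) (hβ2 : β < 2)
    (φ₁ φ₂ φ₃ : ℝ → ℝ)
    (hφ₁ : ∀ s : ℝ, φ₁ s = s ^ β * mlF β (β + 1) (-μ * s ^ β))
    (hφ₂ : ∀ s : ℝ, φ₂ s = s ^ (β + 1) * mlF β (β + 2) (-μ * s ^ β))
    (hφ₃ : ∀ s : ℝ, φ₃ s = s ^ (2 * β) * mlF β (2 * β + 1) (-μ * s ^ β)) :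
    ∀ s : ℝ, 0 < s →
      ((1 / Real.Gamma (2 - β)) * (∫ z in (0:ℝ)..s, deriv (deriv φ₁) z * (s - z) ^ (1 - β))
          + μ * φ₁ s = mittagLeffler β 1 (-μ * s ^ β)) ∧
      ((1 / Real.Gamma (2 - β)) * (∫ z in (0:ℝ)..s, deriv (deriv φ₂) z * (s - z) ^ (1 - β))
          + μ * φ₂ s = s * mittagLeffler β 2 (-μ * s ^ β)) ∧
      ((1 / Real.Gamma (2 - β)) * (∫ z in (0:ℝ)..s, deriv (deriv φ₃) z * (s - z) ^ (1 - β))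
          + μ * φ₃ s = s ^ β * mittagLeffler β (β + 1) (-μ * s ^ β)) := by
  intro s hs
  refine ⟨?_, ?_, ?_⟩
  · have h := assemble (γ := β) hβ1 hβ2 hβ1 φ₁ hφ₁ hs
    rw [show β-β+1 = (1:ℝ) from by ring, show β-β = (0:ℝ) from by ring,
      Real.rpow_zero, one_mul] at h
    exact h
  · have hγ : (1:ℝ) < β+1 := by linarith
    have hφ' : ∀ y : ℝ, φ₂ y = y ^ (β+1) * mlF β ((β+1)+1) (-μ * y ^ β) := by
      intro y; rw [hφ₂ y, show (β+1)+1 = β+2 from by ring]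
    have h := assemble (γ := β+1) hβ1 hβ2 hγ φ₂ hφ' hs
    rw [show β+1-β+1 = (2:ℝ) from by ring, show β+1-β = (1:ℝ) from by ring,
      Real.rpow_one] at h
    exact h
  · have hγ : (1:ℝ) < 2*β := by linarith
    have h := assemble (γ := 2*β) hβ1 hβ2 hγ φ₃ hφ₃ hs
    rw [show 2*β-β+1 = β+1 from by ring, show 2*β-β = β from by ring] at h
    exact h
end

section
/- The systems {1, cos(2kπx), x sin(2kπx) : k ≥ 1} and {2(1-x), 4(1-x)cos(2kπx), 4 sin(2kπx) : k ≥ 1} are biorthogonal on [0,1]; that is, for all integers k, m ≥ 1: ∫₀¹ 2(1-x) dx = 1, ∫₀¹ 2(1-x)·cos(2mπx) dx = 0, ∫₀¹ 2(1-x)·x sin(2mπx) dx = 0, ∫₀¹ 4(1-x)cos(2kπx) dx = 0, ∫₀¹ 4(1-x)cos(2kπx)·cos(2mπx) dx = (1 if k = m, else 0), ∫₀¹ 4(1-x)cos(2kπx)·x sin(2mπx) dx = 0, ∫₀¹ 4 sin(2kπx) dx = 0, ∫₀¹ 4 sin(2kπx)·cos(2mπx) dx = 0, and ∫₀¹ 4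 sin(2kπx)·x sin(2mπx) dx = (1 if k = m, else 0). -/
open MeasureTheory Real

lemma Jgen (b p q r s t u : ℝ) (hb : b ≠ 0) :
    ∫ x in (0:ℝ)..1, ((p + q*x + r*x^2) * Real.cos (b*x) + (s + t*x + u*x^2) * Real.sin (b*x))
    = ((p + q + r)/b - 2*r/b^3 + (t + 2*u)/b^2) * Real.sin b
      + ((q + 2*r)/b^2 - (s + t + u)/b + 2*u/b^3) * Real.cos b
      - (q/b^2 - s/b + 2*u/b^3) := by
  have key : ∀ x : ℝ, HasDerivAt (fun x =>
      ((p + q*x + r*x^2)/b - 2*r/b^3 + (t + 2*u*x)/b^2) * Real.sin (b*x)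
      + ((q + 2*r*x)/b^2 - (s + t*x + u*x^2)/b + 2*u/b^3) * Real.cos (b*x))
      ((p + q*x + r*x^2) * Real.cos (b*x) + (s + t*x + u*x^2) * Real.sin (b*x)) x := by
    intro x
    have hbx : HasDerivAt (fun x : ℝ => b * x) b x := by
      simpa using (hasDerivAt_id x).const_mul b
    have hsin := hbx.sin
    have hcos := hbx.cos
    have hx : HasDerivAt (fun x : ℝ => x) 1 x := hasDerivAt_id x
    have hx2 : HasDerivAt (fun x : ℝ => x^2) (2*x) x := by simpa using hasDerivAt_pow 2 x
    have h1 : HasDerivAt (fun x : ℝ => (p + q*x + r*x^2)/b - 2*r/b^3 + (t + 2*u*x)/b^2)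
        (q/b + 2*r*x/b + 2*u/b^2) x := by
      have h := (((((hasDerivAt_const x p).add ((hx.const_mul q).add
          (hx2.const_mul r))).div_const b).sub (hasDerivAt_const x (2*r/b^3))).add
          (((hasDerivAt_const x t).add (hx.const_mul (2*u))).div_const (b^2)))
      have e : q/b + 2*r*x/b + 2*u/b^2 = (0 + (q*1 + r*(2*x)))/b - 0 + (0 + 2*u*1)/b^2 := by ring
      rw [e]
      exact h.congr_of_eventuallyEq (Filter.Eventually.of_forall fun y => by simp only [Pi.add_apply, Pi.sub_apply]; ring)
    have h2 : HasDerivAt (fun x : ℝ => (q + 2*r*x)/b^2 - (s + t*x + u*x^2)/b + 2*u/b^3)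
        (2*r/b^2 - t/b - 2*u*x/b) x := by
      have h := ((((hasDerivAt_const x q).add (hx.const_mul (2*r))).div_const (b^2)).sub
          (((hasDerivAt_const x s).add ((hx.const_mul t).add
            (hx2.const_mul u))).div_const b)).add (hasDerivAt_const x (2*u/b^3))
      have e : 2*r/b^2 - t/b - 2*u*x/b = (0 + 2*r*1)/b^2 - (0 + (t*1 + u*(2*x)))/b + 0 := by ring
      rw [e]
      exact h.congr_of_eventuallyEq (Filter.Eventually.of_forall fun y => by simp only [Pi.add_apply, Pi.sub_apply]; ring)
    have h := (h1.mul hsin).add (h2.mul hcos)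
    refine h.congr_deriv ?_
    field_simp
    ring
  rw [intervalIntegral.integral_eq_sub_of_hasDerivAt (fun x _ => key x)
    (Continuous.intervalIntegrable (by fun_prop) _ _)]
  norm_num

lemma freq_ne (n : ℤ) (hn : n ≠ 0) : (2*(n:ℝ)*π) ≠ 0 :=
  mul_ne_zero (mul_ne_zero two_ne_zero (Int.cast_ne_zero.2 hn)) pi_ne_zero

lemma bcos (n : ℤ) : Real.cos (2*(n:ℝ)*π) = 1 := by
  rw [show (2*(n:ℝ)*π) = (n:ℝ)*(2*π) by ring]; exact Real.cos_int_mul_two_pi n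

lemma bsin (n : ℤ) : Real.sin (2*(n:ℝ)*π) = 0 := by
  rw [show (2*(n:ℝ)*π) = ((2*n : ℤ):ℝ)*π by push_cast; ring]
  exact Real.sin_int_mul_pi _

lemma Jzero (n : ℤ) (hn : n ≠ 0) (p q s t u : ℝ) (htu : t + u = 0) (f : ℝ → ℝ)
    (hf : ∀ x, f x = (p + q*x + 0*x^2) * Real.cos (2*(n:ℝ)*π*x)
      + (s + t*x + u*x^2) * Real.sin (2*(n:ℝ)*π*x)) :
    (∫ x in (0:ℝ)..1, f x) = 0 := by
  simp only [hf]
  rw [Jgen _ _ _ _ _ _ _ (freq_ne n hn), bcos, bsin]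
  have hb := freq_ne n hn
  have hu : u = -t := by linarith
  subst hu
  field_simp
  ring

lemma Jpoly (a c : ℝ) (f : ℝ → ℝ) (hf : ∀ x, f x = a + c*x) :
    (∫ x in (0:ℝ)..1, f x) = a + c/2 := by
  simp only [hf]
  rw [intervalIntegral.integral_add intervalIntegrable_const
    (Continuous.intervalIntegrable (by fun_prop) _ _),
    intervalIntegral.integral_const, intervalIntegral.integral_const_mul,
    integral_id]
  norm_num
  ring

lemma J2 (n₁ n₂ : ℤ) (h₁ : n₁ ≠ 0) (h₂ : n₂ ≠ 0)
    (p₁ q₁ s₁ t₁ u₁ p₂ q₂ s₂ t₂ u₂ : ℝ) (ht₁ : t₁ + u₁ = 0) (ht₂ : t₂ + u₂ = 0) (f : ℝ → ℝ)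
    (hf : ∀ x, f x = ((p₁ + q₁*x + 0*x^2) * Real.cos (2*(n₁:ℝ)*π*x)
        + (s₁ + t₁*x + u₁*x^2) * Real.sin (2*(n₁:ℝ)*π*x))
      + ((p₂ + q₂*x + 0*x^2) * Real.cos (2*(n₂:ℝ)*π*x)
        + (s₂ + t₂*x + u₂*x^2) * Real.sin (2*(n₂:ℝ)*π*x))) :
    (∫ x in (0:ℝ)..1, f x) = 0 := by
  simp only [hf]
  rw [intervalIntegral.integral_add (Continuous.intervalIntegrable (by fun_prop) _ _)
    (Continuous.intervalIntegrable (by fun_prop) _ _),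
    Jzero n₁ h₁ p₁ q₁ s₁ t₁ u₁ ht₁ _ (fun x => rfl),
    Jzero n₂ h₂ p₂ q₂ s₂ t₂ u₂ ht₂ _ (fun x => rfl)]
  ring

lemma JP (n : ℤ) (hn : n ≠ 0) (a c p q : ℝ) (f : ℝ → ℝ)
    (hf : ∀ x, f x = (a + c*x) + ((p + q*x + 0*x^2) * Real.cos (2*(n:ℝ)*π*x)
      + (0 + 0*x + 0*x^2) * Real.sin (2*(n:ℝ)*π*x))) :
    (∫ x in (0:ℝ)..1, f x) = a + c/2 := by
  simp only [hf]
  rw [intervalIntegral.integral_add (Continuous.intervalIntegrable (by fun_prop) _ _)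
    (Continuous.intervalIntegrable (by fun_prop) _ _),
    Jpoly a c _ (fun x => rfl),
    Jzero n hn p q 0 0 0 (by ring) _ (fun x => rfl)]
  ring

/-- The systems `{1, cos(2kπx), x sin(2kπx)}` and `{2(1-x), 4(1-x)cos(2kπx), 4 sin(2kπx)}`
are biorthogonal on `[0,1]`. -/
theorem biorthogonal_system (k m : ℕ) (hk : 1 ≤ k) (hm : 1 ≤ m) :
    (∫ x in (0:ℝ)..1, 2 * (1 - x)) = 1 ∧
    (∫ x in (0:ℝ)..1, 2 * (1 - x) * Real.cos (2 * m * π * x)) = 0 ∧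
    (∫ x in (0:ℝ)..1, 2 * (1 - x) * (x * Real.sin (2 * m * π * x))) = 0 ∧
    (∫ x in (0:ℝ)..1, 4 * (1 - x) * Real.cos (2 * k * π * x)) = 0 ∧
    (∫ x in (0:ℝ)..1, 4 * (1 - x) * Real.cos (2 * k * π * x) * Real.cos (2 * m * π * x))
      = (if k = m then 1 else 0) ∧
    (∫ x in (0:ℝ)..1, 4 * (1 - x) * Real.cos (2 * k * π * x) * (x * Real.sin (2 * m * π * x)))
      = 0 ∧
    (∫ x in (0:ℝ)..1, 4 * Real.sin (2 * k * π * x)) = 0 ∧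
    (∫ x in (0:ℝ)..1, 4 * Real.sin (2 * k * π * x) * Real.cos (2 * m * π * x)) = 0 ∧
    (∫ x in (0:ℝ)..1, 4 * Real.sin (2 * k * π * x) * (x * Real.sin (2 * m * π * x)))
      = (if k = m then 1 else 0) := by
  have hK : (k:ℤ) ≠ 0 := by omega
  have hM : (m:ℤ) ≠ 0 := by omega
  refine ⟨?_, ?_, ?_, ?_, ?_, ?_, ?_, ?_, ?_⟩
  · exact (Jpoly 2 (-2) _ (fun x => by ring)).trans (by norm_num)
  · exact Jzero (m:ℤ) hM 2 (-2) 0 0 0 (by ring) _ (fun x => by push_cast; ring)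
  · exact Jzero (m:ℤ) hM 0 0 0 2 (-2) (by ring) _ (fun x => by push_cast; ring)
  · exact Jzero (k:ℤ) hK 4 (-4) 0 0 0 (by ring) _ (fun x => by push_cast; ring)
  · by_cases hkm : k = m
    · subst hkm
      rw [if_pos rfl]
      refine (JP (2*(k:ℤ)) (by omega) 2 (-2) 2 (-2) _ (fun x => ?_)).trans (by norm_num)
      have e : 2*((2*(k:ℤ):ℤ):ℝ)*π*x = 2*(k:ℝ)*π*x + 2*(k:ℝ)*π*x := by push_cast; ring
      have h := Real.sin_sq_add_cos_sq (2*(k:ℝ)*π*x)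
      rw [e, Real.cos_add]
      linear_combination (2-2*x)*h
    · rw [if_neg hkm]
      refine J2 ((k:ℤ)-(m:ℤ)) ((k:ℤ)+(m:ℤ)) (by omega) (by omega)
        2 (-2) 0 0 0 2 (-2) 0 0 0 (by ring) (by ring) _ (fun x => ?_)
      have e1 : 2*(((k:ℤ)-(m:ℤ):ℤ):ℝ)*π*x = 2*(k:ℝ)*π*x - 2*(m:ℝ)*π*x := by push_cast; ring
      have e2 : 2*(((k:ℤ)+(m:ℤ):ℤ):ℝ)*π*x = 2*(k:ℝ)*π*x + 2*(m:ℝ)*π*x := by push_cast; ring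
      rw [e1, e2, Real.cos_sub, Real.cos_add]
      ring
  · by_cases hkm : k = m
    · subst hkm
      refine Jzero (2*(k:ℤ)) (by omega) 0 0 0 2 (-2) (by ring) _ (fun x => ?_)
      have e : 2*((2*(k:ℤ):ℤ):ℝ)*π*x = 2*(k:ℝ)*π*x + 2*(k:ℝ)*π*x := by push_cast; ring
      rw [e, Real.sin_add]
      ring
    · refine J2 ((k:ℤ)-(m:ℤ)) ((k:ℤ)+(m:ℤ)) (by omega) (by omega)
        0 0 0 (-2) 2 0 0 0 2 (-2) (by ring) (by ring) _ (fun x => ?_)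
      have e1 : 2*(((k:ℤ)-(m:ℤ):ℤ):ℝ)*π*x = 2*(k:ℝ)*π*x - 2*(m:ℝ)*π*x := by push_cast; ring
      have e2 : 2*(((k:ℤ)+(m:ℤ):ℤ):ℝ)*π*x = 2*(k:ℝ)*π*x + 2*(m:ℝ)*π*x := by push_cast; ring
      rw [e1, e2, Real.sin_sub, Real.sin_add]
      ring
  · exact Jzero (k:ℤ) hK 0 0 4 0 0 (by ring) _ (fun x => by push_cast; ring)
  · by_cases hkm : k = m
    · subst hkm
      refine Jzero (2*(k:ℤ)) (by omega) 0 0 2 0 0 (by ring) _ (fun x => ?_)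
      have e : 2*((2*(k:ℤ):ℤ):ℝ)*π*x = 2*(k:ℝ)*π*x + 2*(k:ℝ)*π*x := by push_cast; ring
      rw [e, Real.sin_add]
      ring
    · refine J2 ((k:ℤ)-(m:ℤ)) ((k:ℤ)+(m:ℤ)) (by omega) (by omega)
        0 0 2 0 0 0 0 2 0 0 (by ring) (by ring) _ (fun x => ?_)
      have e1 : 2*(((k:ℤ)-(m:ℤ):ℤ):ℝ)*π*x = 2*(k:ℝ)*π*x - 2*(m:ℝ)*π*x := by push_cast; ring
      have e2 : 2*(((k:ℤ)+(m:ℤ):ℤ):ℝ)*π*x = 2*(k:ℝ)*π*x + 2*(m:ℝ)*π*x := by push_cast; ring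
      rw [e1, e2, Real.sin_sub, Real.sin_add]
      ring
  · by_cases hkm : k = m
    · subst hkm
      rw [if_pos rfl]
      refine (JP (2*(k:ℤ)) (by omega) 0 2 0 (-2) _ (fun x => ?_)).trans (by norm_num)
      have e : 2*((2*(k:ℤ):ℤ):ℝ)*π*x = 2*(k:ℝ)*π*x + 2*(k:ℝ)*π*x := by push_cast; ring
      have h := Real.sin_sq_add_cos_sq (2*(k:ℝ)*π*x)
      rw [e, Real.cos_add]
      linear_combination (2*x)*h
    · rw [if_neg hkm]
      refine J2 ((k:ℤ)-(m:ℤ)) ((k:ℤ)+(m:ℤ)) (by omega) (by omega)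
        0 2 0 0 0 0 (-2) 0 0 0 (by ring) (by ring) _ (fun x => ?_)
      have e1 : 2*(((k:ℤ)-(m:ℤ):ℤ):ℝ)*π*x = 2*(k:ℝ)*π*x - 2*(m:ℝ)*π*x := by push_cast; ring
      have e2 : 2*(((k:ℤ)+(m:ℤ):ℤ):ℝ)*π*x = 2*(k:ℝ)*π*x + 2*(m:ℝ)*π*x := by push_cast; ring
      rw [e1, e2, Real.cos_sub, Real.cos_add]
      ring
end

section
/- The system {(1-x), (1-x)cos(2kπx), sin(2kπx) : k ≥ 1} is complete in L²(0,1): if f ∈ L²(0,1) satisfies ∫₀¹ f(x)(1-x) dx = 0, ∫₀¹ f(x)(1-x)cos(2kπx) dx = 0 and ∫₀¹ f(x) sin(2kπx) dx = 0 for every integer k ≥ 1, then f = 0 almost everywhere on (0,1). -/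
/-!
Reflection `x ↦ 1 - x` fixes every `cos (2kπx)` and negates every `sin (2kπx)`. Hence, if `f` is
orthogonal to all sines, then `f - f (1 - ·)` is orthogonal to the whole trigonometric system, so
`f` is symmetric about `1/2`. For symmetric `f` the same reflection turns `∫ f x · x · cos` into
`∫ f x · (1 - x) · cos`, so `∫ f cos = 2 ∫ f (1 - x) cos = 0`. All Fourier coefficients of
`f` vanish, and Parseval's identity gives `f = 0`.
-/

open MeasureTheory Real Set

theorem ae_eq_zero_of_fourierCoeffOn_eq_zero {a b : ℝ} (hab : a < b) {f : ℝ → ℂ}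
    (hf : MemLp f 2 (volume.restrict (Ioc a b))) (h : ∀ n, fourierCoeffOn hab f n = 0) :
    f =ᵐ[volume.restrict (Ioc a b)] 0 := by
  have hparseval : ∫ x in Ioc a b, ‖f x‖ ^ 2 = 0 := by
    simpa [h, sub_ne_zero.mpr hab.ne', intervalIntegral.integral_of_le hab.le] using
      (tsum_sq_fourierCoeffOn hab hf).symm
  have hsq := (integral_eq_zero_iff_of_nonneg (fun x => by positivity)
    (hf.integrable_norm_pow two_ne_zero)).mp hparseval
  filter_upwards [hsq] with x hx
  simpa using hx

theorem MeasureTheory.IntegrableOn.mul_continuous_Ioo {a b : ℝ} {f g : ℝ → ℝ}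
    (hf : IntegrableOn f (Ioo a b)) (hg : Continuous g) :
    IntegrableOn (fun x => f x * g x) (Ioo a b) :=
  hf.mul_continuousOn_of_subset hg.continuousOn measurableSet_Ioo isCompact_Icc
    Ioo_subset_Icc_self

theorem fourier_neg_coe_eq_cos_sub_sin_mul_I {T : ℝ} (n : ℤ) (x : ℝ) :
    fourier (-n) (x : AddCircle T) =
      (cos (2 * n * π * x / T) : ℂ) - (sin (2 * n * π * x / T) : ℂ) * Complex.I := by
  rw [fourier_coe_apply]
  have harg : 2 * π * Complex.I * (-n : ℤ) * x / T =
      ((-(2 * n * π * x / T) : ℝ) : ℂ) * Complex.I := by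
    push_cast; ring
  rw [harg, Complex.exp_mul_I, ← Complex.ofReal_cos, ← Complex.ofReal_sin, cos_neg, sin_neg]
  push_cast; ring

theorem integral_mul_cos_int_eq_zero {s : Set ℝ} {T : ℝ} {g : ℝ → ℝ}
    (h : ∀ k : ℕ, ∫ x in s, g x * cos (2 * k * π * x / T) = 0) (n : ℤ) :
    ∫ x in s, g x * cos (2 * n * π * x / T) = 0 := by
  obtain ⟨k, rfl | rfl⟩ := n.eq_nat_or_neg
  · exact_mod_cast h k
  · simpa [neg_div, cos_neg] using h k

theorem integral_mul_sin_int_eq_zero {s : Set ℝ} {T : ℝ} {g : ℝ → ℝ}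
    (h : ∀ k : ℕ, ∫ x in s, g x * sin (2 * k * π * x / T) = 0) (n : ℤ) :
    ∫ x in s, g x * sin (2 * n * π * x / T) = 0 := by
  obtain ⟨k, rfl | rfl⟩ := n.eq_nat_or_neg
  · exact_mod_cast h k
  · simpa [neg_div, sin_neg, integral_neg] using h k

theorem ae_eq_zero_of_integral_mul_cos_sin_eq_zero {a b : ℝ} (hab : a < b) {g : ℝ → ℝ}
    (hg : MemLp g 2 (volume.restrict (Ioo a b)))
    (hcos : ∀ k : ℕ, ∫ x in Ioo a b, g x * cos (2 * k * π * x / (b - a)) = 0)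
    (hsin : ∀ k : ℕ, ∫ x in Ioo a b, g x * sin (2 * k * π * x / (b - a)) = 0) :
    ∀ᵐ x ∂(volume.restrict (Ioo a b)), g x = 0 := by
  have hIoc : volume.restrict (Ioc a b) = volume.restrict (Ioo a b) :=
    (Measure.restrict_congr_set Ioo_ae_eq_Ioc).symm
  have hgi : IntegrableOn g (Ioo a b) := hg.integrable one_le_two
  have hcoeff (n : ℤ) : fourierCoeffOn hab (fun x => (g x : ℂ)) n = 0 := by
    have hc := hgi.mul_continuous_Ioo (g := fun x => cos (2 * n * π * x / (b - a))) (by fun_prop)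
    have hs := hgi.mul_continuous_Ioo (g := fun x => sin (2 * n * π * x / (b - a))) (by fun_prop)
    have hsplit : ∫ x in Ioo a b, fourier (-n) (x : AddCircle (b - a)) • (g x : ℂ) =
        ∫ x in Ioo a b, ((g x * cos (2 * n * π * x / (b - a)) : ℝ) : ℂ) -
          ((g x * sin (2 * n * π * x / (b - a)) : ℝ) : ℂ) * Complex.I := by
      congr 1 with x
      rw [fourier_neg_coe_eq_cos_sub_sin_mul_I, smul_eq_mul]
      push_cast; ring
    rw [fourierCoeffOn_eq_integral, intervalIntegral.integral_of_le hab.le, hIoc, hsplit,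
      integral_sub hc.ofReal (hs.ofReal.mul_const _), integral_mul_const, integral_complex_ofReal,
      integral_complex_ofReal, integral_mul_cos_int_eq_zero hcos, integral_mul_sin_int_eq_zero hsin]
    simp
  have hgc : MemLp (fun x => (g x : ℂ)) 2 (volume.restrict (Ioc a b)) := hIoc ▸ hg.ofReal
  have hzero := ae_eq_zero_of_fourierCoeffOn_eq_zero hab hgc hcoeff
  rw [hIoc] at hzero
  filter_upwards [hzero] with x hx
  simpa using hx

theorem measurePreserving_one_sub_restrict_Ioo :
    MeasurePreserving (fun x : ℝ => 1 - x) (volume.restrict (Ioo 0 1))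
      (volume.restrict (Ioo 0 1)) := by
  have hpre : (fun x : ℝ => 1 - x) ⁻¹' Ioo 0 1 = Ioo 0 1 := by
    ext x
    simp only [mem_preimage, mem_Ioo]
    constructor <;> rintro ⟨_, _⟩ <;> constructor <;> linarith
  simpa only [hpre] using
    (Measure.measurePreserving_sub_left volume (1 : ℝ)).restrict_preimage_emb
      (Homeomorph.subLeft (1 : ℝ)).measurableEmbedding (Ioo 0 1)

theorem integral_Ioo_comp_one_sub (h : ℝ → ℝ) :
    ∫ x in Ioo 0 1, h (1 - x) = ∫ x in Ioo 0 1, h x :=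
  measurePreserving_one_sub_restrict_Ioo.integral_comp
    (Homeomorph.subLeft (1 : ℝ)).measurableEmbedding h

theorem cos_two_mul_nat_mul_pi_mul_one_sub (k : ℕ) (x : ℝ) :
    cos (2 * k * π * (1 - x)) = cos (2 * k * π * x) := by
  rw [← cos_nat_mul_two_pi_sub _ k]
  ring_nf

theorem sin_two_mul_nat_mul_pi_mul_one_sub (k : ℕ) (x : ℝ) :
    sin (2 * k * π * (1 - x)) = -sin (2 * k * π * x) := by
  rw [← sin_nat_mul_two_pi_sub _ k]
  ring_nf

theorem ae_comp_one_sub_eq_of_integral_mul_sin_eq_zero {f : ℝ → ℝ}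
    (hf : MemLp f 2 (volume.restrict (Ioo 0 1)))
    (hsin : ∀ k : ℕ, ∫ x in Ioo 0 1, f x * sin (2 * k * π * x) = 0) :
    ∀ᵐ x ∂(volume.restrict (Ioo 0 1)), f (1 - x) = f x := by
  have hfi : IntegrableOn f (Ioo 0 1) := hf.integrable one_le_two
  have hfi' : IntegrableOn (fun x => f (1 - x)) (Ioo 0 1) :=
    measurePreserving_one_sub_restrict_Ioo.integrable_comp_of_integrable hfi
  have hreflect (c : ℝ → ℝ) (hc : Continuous c) :
      ∫ x in Ioo 0 1, (f x - f (1 - x)) * c x =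
        (∫ x in Ioo 0 1, f x * c x) - ∫ x in Ioo 0 1, f x * c (1 - x) := by
    simp_rw [sub_mul]
    rw [integral_sub (hfi.mul_continuous_Ioo hc) (hfi'.mul_continuous_Ioo hc),
      ← integral_Ioo_comp_one_sub (fun x => f x * c (1 - x))]
    simp only [sub_sub_cancel]
  have hg : MemLp (fun x => f x - f (1 - x)) 2 (volume.restrict (Ioo 0 1)) :=
    hf.sub (hf.comp_measurePreserving measurePreserving_one_sub_restrict_Ioo)
  have hcos (k : ℕ) :
      ∫ x in Ioo 0 1, (f x - f (1 - x)) * cos (2 * k * π * x / (1 - 0)) = 0 := by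
    simp only [sub_zero, div_one]
    rw [hreflect _ (by fun_prop)]
    simp_rw [cos_two_mul_nat_mul_pi_mul_one_sub, sub_self]
  have hsin' (k : ℕ) :
      ∫ x in Ioo 0 1, (f x - f (1 - x)) * sin (2 * k * π * x / (1 - 0)) = 0 := by
    simp only [sub_zero, div_one]
    rw [hreflect _ (by fun_prop)]
    simp_rw [sin_two_mul_nat_mul_pi_mul_one_sub, mul_neg, integral_neg, hsin, neg_zero, sub_zero]
  filter_upwards [ae_eq_zero_of_integral_mul_cos_sin_eq_zero zero_lt_one hg hcos hsin']
    with x hx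
  linarith

theorem integral_mul_eq_two_mul_integral_mul_one_sub_mul {f c : ℝ → ℝ}
    (hf : IntegrableOn f (Ioo 0 1))
    (hfsymm : ∀ᵐ x ∂(volume.restrict (Ioo 0 1)), f (1 - x) = f x)
    (hc : Continuous c) (hcsymm : ∀ x, c (1 - x) = c x) :
    ∫ x in Ioo 0 1, f x * c x = 2 * ∫ x in Ioo 0 1, f x * (1 - x) * c x := by
  have hweighted : ∫ x in Ioo 0 1, f x * x * c x = ∫ x in Ioo 0 1, f x * (1 - x) * c x := by
    rw [← integral_Ioo_comp_one_sub]
    refine integral_congr_ae (hfsymm.mono fun x hx => ?_)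
    simp only [hx, hcsymm]
  have hsplit : ∫ x in Ioo 0 1, f x * c x =
      (∫ x in Ioo 0 1, f x * (1 - x) * c x) + ∫ x in Ioo 0 1, f x * x * c x := by
    rw [← integral_add]
    · congr 1 with x; ring
    · simp only [mul_assoc]
      exact hf.mul_continuous_Ioo (by fun_prop)
    · simp only [mul_assoc]
      exact hf.mul_continuous_Ioo (by fun_prop)
  rw [hsplit, hweighted, two_mul]

/-- Completeness of the system `{(1-x), (1-x)cos(2kπx), sin(2kπx) : k ≥ 1}` in `L²(0,1)`:
if `f ∈ L²(0,1)` is orthogonal to every member of the system, then `f = 0` a.e. on `(0,1)`. -/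
theorem complete_system_L2 (f : ℝ → ℝ)
    (hf : MemLp f 2 (volume.restrict (Set.Ioo (0:ℝ) 1)))
    (h1 : ∫ x in Set.Ioo (0:ℝ) 1, f x * (1 - x) = 0)
    (h2 : ∀ k : ℕ, 1 ≤ k → ∫ x in Set.Ioo (0:ℝ) 1, f x * (1 - x) * Real.cos (2 * k * π * x) = 0)
    (h3 : ∀ k : ℕ, 1 ≤ k → ∫ x in Set.Ioo (0:ℝ) 1, f x * Real.sin (2 * k * π * x) = 0) :
    ∀ᵐ x ∂(volume.restrict (Set.Ioo (0:ℝ) 1)), f x = 0 := by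
  have hsin (k : ℕ) : ∫ x in Ioo 0 1, f x * sin (2 * k * π * x) = 0 := by
    rcases k.eq_zero_or_pos with rfl | hk
    · simp
    · exact h3 k hk
  have hsymm := ae_comp_one_sub_eq_of_integral_mul_sin_eq_zero hf hsin
  have hcos (k : ℕ) : ∫ x in Ioo 0 1, f x * cos (2 * k * π * x) = 0 := by
    rw [integral_mul_eq_two_mul_integral_mul_one_sub_mul (hf.integrable one_le_two) hsymm
      (by fun_prop) (cos_two_mul_nat_mul_pi_mul_one_sub k)]
    rcases k.eq_zero_or_pos with rfl | hk
    · simpa using h1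
    · rw [h2 k hk, mul_zero]
  exact ae_eq_zero_of_integral_mul_cos_sin_eq_zero zero_lt_one hf (by simpa using hcos)
    (by simpa using hsin)
end

section
/- Let 0 < α < 1, q > 0, k ≥ 1 an integer, and let f : [0,1] → ℝ be continuous. Suppose u : [0,1] × [0,q] → ℝ is continuous, u(·,t) is twice continuously differentiable in x on [0,1] for each t ∈ (0,q), ∂u/∂t exists and is continuous on [0,1] × (0,q) with (x,z) ↦ ∂u/∂t(x,z)(t-z)^{-α} integrable on [0,1] × (0,t) for each t ∈ (0,q), u(0,t) = u(1,t) for all t, and (1/Γ(1-α)) ∫₀ᵗ u_t(x,z)(t-z)^{-α} dz − u_xx(x,t) = f(x) for all (x,t) ∈ (0,1) × (0,q). Then V(t) = 4∫₀¹ u(x,t) sin(2kπx) dx satisfies the fractional ODE (D^α V)(t) + (2kπ)² V(t) = f₂ for t ∈ (0,q), where f₂ = 4∫₀¹ f(x) sin(2kπx) dx. -/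
/-!
Multiply the equation by `sin (2kπx)` and integrate over `[0,1]`. Continuity of `u_t` allows
differentiating `V` under the integral sign, and integrability of `u_t(x,z)(t-z)^{-α}` lets
Fubini exchange the `x`- and `z`-integrals, so the Caputo derivative of `V` is the sine
coefficient of the Caputo derivative of `u`. Integrating by parts twice,
`∫₀¹ u_xx sin (2kπx) dx = -(2kπ)² ∫₀¹ u sin (2kπx) dx`: the boundary terms cancel because
`sin (2kπx)` vanishes and `cos (2kπx)` equals `1` at both ends, while `u(0,t) = u(1,t)`.
-/

open MeasureTheory Real

open Set Filter Topology

theorem eqOn_deriv_deriv_derivWithin_Icc (g : ℝ → ℝ) (a b : ℝ) :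
    EqOn (deriv (deriv g)) (derivWithin (derivWithin g (Icc a b)) (Icc a b)) (Ioo a b) := by
  intro x hx
  have hg : derivWithin g (Icc a b) =ᶠ[𝓝 x] deriv g :=
    eventually_of_mem (isOpen_Ioo.mem_nhds hx) fun y hy =>
      derivWithin_of_mem_nhds (Icc_mem_nhds hy.1 hy.2)
  rw [derivWithin_of_mem_nhds (Icc_mem_nhds hx.1 hx.2), hg.deriv_eq]

theorem hasDerivAt_derivWithin_Icc {g : ℝ → ℝ} {a b x : ℝ}
    (hg : DifferentiableOn ℝ g (Icc a b)) (hx : x ∈ Ioo a b) :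
    HasDerivAt g (derivWithin g (Icc a b) x) x :=
  (hg x (Ioo_subset_Icc_self hx)).hasDerivWithinAt.hasDerivAt (Icc_mem_nhds hx.1 hx.2)

theorem intervalIntegrable_deriv_deriv_mul {g s : ℝ → ℝ} {a b : ℝ} (hab : a < b)
    (hg : ContDiffOn ℝ 2 g (Icc a b)) (hs : ContinuousOn s (Icc a b)) :
    IntervalIntegrable (fun x => deriv (deriv g) x * s x) volume a b := by
  have hg2 : ContinuousOn (derivWithin (derivWithin g (Icc a b)) (Icc a b)) (Icc a b) :=
    (hg.derivWithin (uniqueDiffOn_Icc hab) (by norm_num)).continuousOn_derivWithin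
      (uniqueDiffOn_Icc hab) le_rfl
  refine ((hg2.mul hs).intervalIntegrable_of_Icc hab.le).congr_uIoo ?_
  rw [uIoo_of_le hab.le]
  exact fun x hx => by simp only [Pi.mul_apply, eqOn_deriv_deriv_derivWithin_Icc g a b hx]

theorem integral_deriv_deriv_mul_sin {g : ℝ → ℝ} {a b : ℝ} (c : ℝ) (hab : a < b)
    (hg : ContDiffOn ℝ 2 g (Icc a b)) :
    ∫ x in a..b, deriv (deriv g) x * sin (c * x) =
      (derivWithin g (Icc a b) b * sin (c * b) - c * g b * cos (c * b))
        - (derivWithin g (Icc a b) a * sin (c * a) - c * g a * cos (c * a))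
        - c ^ 2 * ∫ x in a..b, g x * sin (c * x) := by
  set g₁ := derivWithin g (Icc a b)
  set g₂ := derivWithin g₁ (Icc a b)
  have hU := uniqueDiffOn_Icc hab
  have hg₁ : ContDiffOn ℝ 1 g₁ (Icc a b) := hg.derivWithin hU (by norm_num)
  have hg₂ : ContinuousOn g₂ (Icc a b) := hg₁.continuousOn_derivWithin hU le_rfl
  have hsin : Continuous fun x => sin (c * x) := by fun_prop
  have hcos : Continuous fun x => cos (c * x) := by fun_prop
  have hd₀ : ∀ x ∈ Ioo a b, HasDerivAt g (g₁ x) x := fun x hx =>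
    hasDerivAt_derivWithin_Icc (hg.differentiableOn (by norm_num)) hx
  have hd₁ : ∀ x ∈ Ioo a b, HasDerivAt g₁ (g₂ x) x := fun x hx =>
    hasDerivAt_derivWithin_Icc hg₁.differentiableOn_one hx
  have hderiv : ∀ x ∈ Ioo a b,
      HasDerivAt (fun x => g₁ x * sin (c * x) - c * g x * cos (c * x))
        (g₂ x * sin (c * x) + c ^ 2 * (g x * sin (c * x))) x := by
    intro x hx
    have hs := ((hasDerivAt_id' x).const_mul c).sin
    have hc := ((hasDerivAt_id' x).const_mul c).cos
    exact (((hd₁ x hx).mul hs).sub (((hd₀ x hx).const_mul c).mul hc)).congr_deriv (by ring)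
  have hh : ContinuousOn (fun x => g₁ x * sin (c * x) - c * g x * cos (c * x)) (Icc a b) :=
    (hg₁.continuousOn.mul hsin.continuousOn).sub
      ((continuousOn_const.mul hg.continuousOn).mul hcos.continuousOn)
  have hi₂ : IntervalIntegrable (fun x => g₂ x * sin (c * x)) volume a b :=
    (hg₂.mul hsin.continuousOn).intervalIntegrable_of_Icc hab.le
  have hi₀ : IntervalIntegrable (fun x => c ^ 2 * (g x * sin (c * x))) volume a b :=
    (continuousOn_const.mul (hg.continuousOn.mul hsin.continuousOn)).intervalIntegrable_of_Icc
      hab.le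
  have hftc := intervalIntegral.integral_eq_sub_of_hasDerivAt_of_le hab.le hh hderiv
    (hi₂.add hi₀)
  rw [intervalIntegral.integral_add hi₂ hi₀, intervalIntegral.integral_const_mul] at hftc
  rw [intervalIntegral.integral_congr_Ioo_of_le (g := fun x => g₂ x * sin (c * x)) hab.le
    fun x hx => by rw [eqOn_deriv_deriv_derivWithin_Icc g a b hx]]
  linarith

theorem integral_deriv_deriv_mul_sin_two_mul_nat_mul_pi {g : ℝ → ℝ} (k : ℕ)
    (hg : ContDiffOn ℝ 2 g (Icc 0 1)) (hg01 : g 0 = g 1) :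
    ∫ x in (0:ℝ)..1, deriv (deriv g) x * sin (2 * k * π * x) =
      -(2 * k * π) ^ 2 * ∫ x in (0:ℝ)..1, g x * sin (2 * k * π * x) := by
  have hsin : sin (2 * k * π) = 0 := by
    simpa [mul_assoc] using sin_nat_mul_pi (2 * k)
  have hcos : cos (2 * k * π) = 1 := by
    simpa [mul_comm, mul_left_comm, mul_assoc] using cos_nat_mul_two_pi k
  rw [integral_deriv_deriv_mul_sin _ zero_lt_one hg]
  simp only [mul_zero, mul_one, sin_zero, cos_zero, hsin, hcos, hg01]
  ring

theorem hasDerivAt_intervalIntegral_of_continuousOn_prod {u ut : ℝ → ℝ → ℝ} {a b z : ℝ}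
    {J : Set ℝ} (hab : a ≤ b) (hJ : J ∈ 𝓝 z) (hu : ∀ τ ∈ J, ContinuousOn (u · τ) (Icc a b))
    (hut : ∀ x ∈ Icc a b, ∀ τ ∈ J, HasDerivAt (u x) (ut x τ) τ)
    (hut_cont : ContinuousOn (fun p : ℝ × ℝ => ut p.1 p.2) (Icc a b ×ˢ J)) :
    HasDerivAt (fun τ => ∫ x in a..b, u x τ) (∫ x in a..b, ut x z) z := by
  obtain ⟨ε, hε, hεJ⟩ := Metric.nhds_basis_closedBall.mem_iff.1 hJ
  obtain ⟨M, hM⟩ := (isCompact_Icc.prod (isCompact_closedBall z ε)).exists_bound_of_continuousOn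
    (hut_cont.mono (prod_mono_right hεJ))
  have hIcc : uIoc a b ⊆ Icc a b := by
    rw [uIoc_of_le hab]
    exact Ioc_subset_Icc_self
  have hmeas : ∀ g : ℝ → ℝ, ContinuousOn g (Icc a b) →
      AEStronglyMeasurable g (volume.restrict (uIoc a b)) := fun g hg =>
    (hg.mono hIcc).aestronglyMeasurable measurableSet_uIoc
  have hut_z : ContinuousOn (ut · z) (Icc a b) :=
    hut_cont.comp (continuous_id.prodMk continuous_const).continuousOn fun x hx =>
      ⟨hx, mem_of_mem_nhds hJ⟩
  refine (intervalIntegral.hasDerivAt_integral_of_dominated_loc_of_deriv_le (bound := fun _ => M)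
    (Metric.closedBall_mem_nhds z hε) (eventually_of_mem hJ fun τ hτ => hmeas _ (hu τ hτ))
    ((hu z (mem_of_mem_nhds hJ)).intervalIntegrable_of_Icc hab) (hmeas _ hut_z)
    (ae_of_all _ fun x hx τ hτ => hM (x, τ) ⟨hIcc hx, hτ⟩) intervalIntegrable_const
    (ae_of_all _ fun x hx τ hτ => hut x (hIcc hx) τ (hεJ hτ))).2

theorem integral_integral_mul_swap {α β : Type*} [MeasurableSpace α] [MeasurableSpace β]
    {μ : Measure α} {ν : Measure β} [SFinite μ] [SFinite ν] {F : α → β → ℝ} {s : α → ℝ}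
    {w : β → ℝ} {C : ℝ} (hF : Integrable (fun p : α × β => F p.1 p.2 * w p.2) (μ.prod ν))
    (hs : AEStronglyMeasurable s μ) (hC : ∀ x, ‖s x‖ ≤ C) :
    ∫ y, (∫ x, F x y * s x ∂μ) * w y ∂ν = ∫ x, (∫ y, F x y * w y ∂ν) * s x ∂μ := by
  have hFs : Integrable (fun p : α × β => s p.1 * (F p.1 p.2 * w p.2)) (μ.prod ν) :=
    hF.bdd_mul (hs.comp_quasiMeasurePreserving Measure.quasiMeasurePreserving_fst)
      (ae_of_all _ fun p => hC p.1)
  calc ∫ y, (∫ x, F x y * s x ∂μ) * w y ∂ν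
      = ∫ y, ∫ x, s x * (F x y * w y) ∂μ ∂ν := by
        congr 1 with y
        rw [← integral_mul_const]
        congr 1 with x
        ring
    _ = ∫ x, ∫ y, s x * (F x y * w y) ∂ν ∂μ := (integral_integral_swap hFs).symm
    _ = ∫ x, (∫ y, F x y * w y ∂ν) * s x ∂μ := by
        congr 1 with x
        rw [integral_const_mul, mul_comm]

theorem intervalIntegral_integral_mul_swap {F : ℝ → ℝ → ℝ} {s w : ℝ → ℝ} {a b c d C : ℝ}
    (hab : a ≤ b) (hcd : c ≤ d)
    (hF : IntegrableOn (fun p : ℝ × ℝ => F p.1 p.2 * w p.2) (Icc a b ×ˢ Icc c d))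
    (hs : Continuous s) (hC : ∀ x, ‖s x‖ ≤ C) :
    ∫ y in c..d, (∫ x in a..b, F x y * s x) * w y =
      ∫ x in a..b, (∫ y in c..d, F x y * w y) * s x := by
  simp only [intervalIntegral.integral_of_le hab, intervalIntegral.integral_of_le hcd]
  refine integral_integral_mul_swap ?_ hs.aestronglyMeasurable hC
  rw [Measure.prod_restrict, ← Measure.volume_eq_prod]
  exact hF.mono_set (prod_mono Ioc_subset_Icc_self Ioc_subset_Icc_self)

theorem sine_mode_fractional_ode_general (α q : ℝ) (k : ℕ)
    (f : ℝ → ℝ) (hf : ContinuousOn f (Set.Icc 0 1))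
    (u ut : ℝ → ℝ → ℝ)
    (hu_cont : ContinuousOn (fun pt : ℝ × ℝ => u pt.1 pt.2) (Set.Icc 0 1 ×ˢ Set.Icc 0 q))
    (hu_xx : ∀ t ∈ Set.Ioo (0:ℝ) q, ContDiffOn ℝ 2 (fun x => u x t) (Set.Icc 0 1))
    (hut : ∀ x ∈ Set.Icc (0:ℝ) 1, ∀ t ∈ Set.Ioo (0:ℝ) q, HasDerivAt (fun τ => u x τ) (ut x t) t)
    (hut_cont : ContinuousOn (fun pt : ℝ × ℝ => ut pt.1 pt.2) (Set.Icc 0 1 ×ˢ Set.Ioo 0 q))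
    (hint : ∀ t ∈ Set.Ioo (0:ℝ) q,
      IntegrableOn (fun pt : ℝ × ℝ => ut pt.1 pt.2 * (t - pt.2) ^ (-α))
        (Set.Icc 0 1 ×ˢ Set.Ioo 0 t))
    (hbc : ∀ t ∈ Set.Icc (0:ℝ) q, u 0 t = u 1 t)
    (hpde : ∀ x ∈ Set.Ioo (0:ℝ) 1, ∀ t ∈ Set.Ioo (0:ℝ) q,
      (1 / Real.Gamma (1 - α)) * (∫ z in (0:ℝ)..t, ut x z * (t - z) ^ (-α))
        - deriv (deriv (fun ξ => u ξ t)) x = f x) :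
    ∀ t ∈ Set.Ioo (0:ℝ) q,
      (1 / Real.Gamma (1 - α)) *
          (∫ z in (0:ℝ)..t,
            deriv (fun τ => 4 * ∫ x in (0:ℝ)..1, u x τ * Real.sin (2 * k * π * x)) z
              * (t - z) ^ (-α))
        + (2 * k * π) ^ 2 * (4 * ∫ x in (0:ℝ)..1, u x t * Real.sin (2 * k * π * x))
      = 4 * ∫ x in (0:ℝ)..1, f x * Real.sin (2 * k * π * x) := by
  intro t ht
  have hibp := integral_deriv_deriv_mul_sin_two_mul_nat_mul_pi k (hu_xx t ht)
    (hbc t (Ioo_subset_Icc_self ht))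
  set c : ℝ := 2 * k * π
  have hsin : Continuous fun x => sin (c * x) := by fun_prop
  have hV : ∀ z ∈ Ioo 0 q,
      HasDerivAt (fun τ => 4 * ∫ x in (0:ℝ)..1, u x τ * sin (c * x))
        (4 * ∫ x in (0:ℝ)..1, ut x z * sin (c * x)) z := fun z hz =>
    (hasDerivAt_intervalIntegral_of_continuousOn_prod zero_le_one (isOpen_Ioo.mem_nhds hz)
      (fun τ hτ => (hu_cont.comp (continuous_id.prodMk continuous_const).continuousOn
        fun x hx => ⟨hx, Ioo_subset_Icc_self hτ⟩).mul hsin.continuousOn)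
      (fun x hx τ hτ => (hut x hx τ hτ).mul_const _)
      (hut_cont.mul (hsin.comp continuous_fst).continuousOn)).const_mul 4
  have hcaputo :
      ∫ z in (0:ℝ)..t, deriv (fun τ => 4 * ∫ x in (0:ℝ)..1, u x τ * sin (c * x)) z * (t - z) ^ (-α)
        = 4 * ∫ x in (0:ℝ)..1, (∫ z in (0:ℝ)..t, ut x z * (t - z) ^ (-α)) * sin (c * x) := by
    rw [intervalIntegral.integral_congr_Ioo_of_le ht.1.le fun z hz => by
      rw [(hV z ⟨hz.1, hz.2.trans ht.2⟩).deriv, mul_assoc]]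
    rw [intervalIntegral.integral_const_mul, intervalIntegral_integral_mul_swap zero_le_one ht.1.le
      _ hsin fun x => by simpa using abs_sin_le_one (c * x)]
    refine (hint t ht).congr_set_ae ?_
    rw [Measure.volume_eq_prod]
    exact Measure.set_prod_ae_eq (ae_eq_refl _) Ioo_ae_eq_Icc.symm
  have hproject : (1 / Gamma (1 - α)) *
      ∫ x in (0:ℝ)..1, (∫ z in (0:ℝ)..t, ut x z * (t - z) ^ (-α)) * sin (c * x)
        = (∫ x in (0:ℝ)..1, f x * sin (c * x))
          + ∫ x in (0:ℝ)..1, deriv (deriv (fun ξ => u ξ t)) x * sin (c * x) := by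
    have hfs : IntervalIntegrable (fun x => f x * sin (c * x)) volume 0 1 :=
      (hf.mul hsin.continuousOn).intervalIntegrable_of_Icc zero_le_one
    rw [← intervalIntegral.integral_const_mul, ← intervalIntegral.integral_add hfs
      (intervalIntegrable_deriv_deriv_mul zero_lt_one (hu_xx t ht) hsin.continuousOn)]
    exact intervalIntegral.integral_congr_Ioo_of_le zero_le_one fun x hx => by
      linear_combination hpde x hx t ht * sin (c * x)
  rw [hcaputo]
  linear_combination 4 * hproject + 4 * hibp

/-- If `u` solves the time-fractional diffusion equation
`(D^α u)(x,t) - u_xx(x,t) = f(x)` on `(0,1) × (0,q)` with `u(0,t) = u(1,t)`, then the mode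
`V(t) = 4∫₀¹ u(x,t) sin(2kπx) dx` satisfies the fractional ODE
`(D^α V)(t) + (2kπ)² V(t) = f₂`, where `f₂ = 4∫₀¹ f(x) sin(2kπx) dx`. -/
theorem sine_mode_fractional_ode (α q : ℝ) (hα0 : 0 < α) (hα1 : α < 1) (hq : 0 < q)
    (k : ℕ) (hk : 1 ≤ k)
    (f : ℝ → ℝ) (hf : ContinuousOn f (Set.Icc 0 1))
    (u ut : ℝ → ℝ → ℝ)
    (hu_cont : ContinuousOn (fun pt : ℝ × ℝ => u pt.1 pt.2) (Set.Icc 0 1 ×ˢ Set.Icc 0 q))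
    (hu_xx : ∀ t ∈ Set.Ioo (0:ℝ) q, ContDiffOn ℝ 2 (fun x => u x t) (Set.Icc 0 1))
    (hut : ∀ x ∈ Set.Icc (0:ℝ) 1, ∀ t ∈ Set.Ioo (0:ℝ) q, HasDerivAt (fun τ => u x τ) (ut x t) t)
    (hut_cont : ContinuousOn (fun pt : ℝ × ℝ => ut pt.1 pt.2) (Set.Icc 0 1 ×ˢ Set.Ioo 0 q))
    (hint : ∀ t ∈ Set.Ioo (0:ℝ) q,
      IntegrableOn (fun pt : ℝ × ℝ => ut pt.1 pt.2 * (t - pt.2) ^ (-α))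
        (Set.Icc 0 1 ×ˢ Set.Ioo 0 t))
    (hbc : ∀ t ∈ Set.Icc (0:ℝ) q, u 0 t = u 1 t)
    (hpde : ∀ x ∈ Set.Ioo (0:ℝ) 1, ∀ t ∈ Set.Ioo (0:ℝ) q,
      (1 / Real.Gamma (1 - α)) * (∫ z in (0:ℝ)..t, ut x z * (t - z) ^ (-α))
        - deriv (deriv (fun ξ => u ξ t)) x = f x) :
    ∀ t ∈ Set.Ioo (0:ℝ) q,
      (1 / Real.Gamma (1 - α)) *
          (∫ z in (0:ℝ)..t,
            deriv (fun τ => 4 * ∫ x in (0:ℝ)..1, u x τ * Real.sin (2 * k * π * x)) z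
              * (t - z) ^ (-α))
        + (2 * k * π) ^ 2 * (4 * ∫ x in (0:ℝ)..1, u x t * Real.sin (2 * k * π * x))
      = 4 * ∫ x in (0:ℝ)..1, f x * Real.sin (2 * k * π * x) :=
  sine_mode_fractional_ode_general α q k f hf u ut hu_cont hu_xx hut hut_cont hint hbc hpde
end

section
/- Let 0 < α < 1, 1 < β < 2, p, q > 0 with Δ₀ := p + p^β/Γ(β+1) − q^α/Γ(α+1) = 0, and let f₀ ≠ 0. Define u₀(t) = f₀ (t^α − q^α)/Γ(α+1) for 0 ≤ t ≤ q and u₀(t) = f₀ [((−t)^β − p^β)/Γ(β+1) − t − p] for −p ≤ t ≤ 0. Then: (i) the two formulas agree at t = 0 (so u₀ is continuous on [−p,q]); (ii) u₀(q) = 0 and u₀(−p) = 0; (iii) (1/Γ(1−α)) ∫₀ᵗ u₀′(z)(t−z)^{−α} dz = f₀ for every t ∈ (0,q); (iv) (1/Γ(2−β)) ∫_t^0 u₀″(z)(z−t)^{1−β} dz = f₀ for every t ∈ (−p,0); (v) lim_{t→0+} (1/Γ(1−α)) ∫₀ᵗ u₀′(z)(t−z)^{−α} dz = f₀ = lim_{t→0−}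 (−u₀′(t)). In particular, (u(x,t), f(x)) = (u₀(t), f₀) is a nontrivial solution of the inverse source problem when Δ₀ = 0. -/
open MeasureTheory

private lemma beta01 (a : ℝ) (ha0 : 0 < a) (ha1 : a < 1) :
    ∫ x in (0:ℝ)..1, x ^ (a - 1) * (1 - x) ^ (-a) = Real.Gamma a * Real.Gamma (1 - a) := by
  have hb : (0:ℝ) < 1 - a := by linarith
  have h := Complex.Gamma_mul_Gamma_eq_betaIntegral (s := (a:ℂ)) (t := ((1 - a : ℝ) : ℂ))
    (by simpa using ha0) (by simpa using hb)
  have hsum : (a:ℂ) + ((1 - a : ℝ) : ℂ) = 1 := by push_cast; ring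
  rw [hsum, Complex.Gamma_one, one_mul] at h
  have hcast : Complex.betaIntegral (a:ℂ) ((1 - a : ℝ) : ℂ)
      = ((∫ x in (0:ℝ)..1, x ^ (a - 1) * (1 - x) ^ (-a) : ℝ) : ℂ) := by
    rw [Complex.betaIntegral, ← intervalIntegral.integral_ofReal]
    apply intervalIntegral.integral_congr
    intro x hx
    rw [Set.uIcc_of_le (by norm_num : (0:ℝ) ≤ 1)] at hx
    have hx0 : (0:ℝ) ≤ x := hx.1
    have hx1 : (0:ℝ) ≤ 1 - x := by linarith [hx.2]
    simp only [Complex.ofReal_mul, Complex.ofReal_cpow hx0, Complex.ofReal_cpow hx1]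
    push_cast
    ring_nf
  rw [hcast] at h
  have := h.symm
  have h2 : ((Real.Gamma a * Real.Gamma (1 - a) : ℝ) : ℂ)
      = ((∫ x in (0:ℝ)..1, x ^ (a - 1) * (1 - x) ^ (-a) : ℝ) : ℂ) := by
    rw [this, Complex.ofReal_mul, Complex.Gamma_ofReal, Complex.Gamma_ofReal]
  exact_mod_cast h2.symm

private lemma betac (a c : ℝ) (ha0 : 0 < a) (ha1 : a < 1) (hc : 0 < c) :
    ∫ z in (0:ℝ)..c, z ^ (a - 1) * (c - z) ^ (-a) = Real.Gamma a * Real.Gamma (1 - a) := by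
  have key := intervalIntegral.integral_comp_mul_left (a := (0:ℝ)) (b := 1)
    (fun z => z ^ (a - 1) * (c - z) ^ (-a)) hc.ne'
  have lhs : (∫ x in (0:ℝ)..1, (fun z => z ^ (a - 1) * (c - z) ^ (-a)) (c * x))
      = c⁻¹ * (Real.Gamma a * Real.Gamma (1 - a)) := by
    rw [← beta01 a ha0 ha1, ← intervalIntegral.integral_const_mul]
    apply intervalIntegral.integral_congr
    intro x hx
    rw [Set.uIcc_of_le (by norm_num : (0:ℝ) ≤ 1)] at hx
    have hx0 : (0:ℝ) ≤ x := hx.1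
    have hx1 : (0:ℝ) ≤ 1 - x := by linarith [hx.2]
    simp only
    have e1 : c - c * x = c * (1 - x) := by ring
    rw [e1, Real.mul_rpow hc.le hx0, Real.mul_rpow hc.le hx1]
    have e2 : c ^ (a - 1) * c ^ (-a) = c⁻¹ := by
      rw [← Real.rpow_add hc, show a - 1 + -a = -1 by ring, Real.rpow_neg_one]
    calc c ^ (a - 1) * x ^ (a - 1) * (c ^ (-a) * (1 - x) ^ (-a))
        = (c ^ (a - 1) * c ^ (-a)) * (x ^ (a - 1) * (1 - x) ^ (-a)) := by ring
      _ = c⁻¹ * (x ^ (a - 1) * (1 - x) ^ (-a)) := by rw [e2]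
  rw [lhs] at key
  simp only [mul_zero, mul_one, smul_eq_mul] at key
  have := mul_left_cancel₀ (inv_ne_zero hc.ne') key
  linarith [this]


/-- Nontrivial zeroth-mode solution when `Δ₀ = 0`: with
`u₀(t) = f₀ (t^α − q^α)/Γ(α+1)` for `t ≥ 0` and
`u₀(t) = f₀ [((−t)^β − p^β)/Γ(β+1) − t − p]` for `t < 0`, the pair `(u₀, f₀)` gives a
nontrivial solution: the two formulas agree at `t = 0`, `u₀(q) = u₀(−p) = 0`, the forward
Caputo derivative of order `α` equals `f₀` on `(0,q)`, the backward Caputo derivative of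
order `β` equals `f₀` on `(−p,0)`, and the transmitting condition holds. -/
theorem nontrivial_zeroth_mode (α β p q f₀ : ℝ)
    (hα0 : 0 < α) (hα1 : α < 1) (hβ1 : 1 < β) (hβ2 : β < 2) (hp : 0 < p) (hq : 0 < q)
    (hΔ0 : p + p ^ β / Real.Gamma (β + 1) - q ^ α / Real.Gamma (α + 1) = 0)
    (hf₀ : f₀ ≠ 0)
    (u₀ : ℝ → ℝ)
    (hu₀ : ∀ t : ℝ, u₀ t =
      if 0 ≤ t then f₀ * (t ^ α - q ^ α) / Real.Gamma (α + 1)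
      else f₀ * (((-t) ^ β - p ^ β) / Real.Gamma (β + 1) - t - p)) :
    -- (i) the two formulas agree at t = 0
    (f₀ * ((0:ℝ) ^ α - q ^ α) / Real.Gamma (α + 1)
      = f₀ * ((((0:ℝ)) ^ β - p ^ β) / Real.Gamma (β + 1) - 0 - p)) ∧
    -- (ii) boundary values
    u₀ q = 0 ∧ u₀ (-p) = 0 ∧
    -- (iii) forward Caputo derivative of order α equals f₀ on (0,q)
    (∀ t ∈ Set.Ioo (0:ℝ) q,
      (1 / Real.Gamma (1 - α)) * ∫ z in (0:ℝ)..t, deriv u₀ z * (t - z) ^ (-α) = f₀) ∧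
    -- (iv) backward Caputo derivative of order β equals f₀ on (−p,0)
    (∀ t ∈ Set.Ioo (-p) (0:ℝ),
      (1 / Real.Gamma (2 - β)) * ∫ z in t..(0:ℝ), deriv (deriv u₀) z * (z - t) ^ (1 - β) = f₀) ∧
    -- (v) the transmitting condition
    Filter.Tendsto
      (fun t => (1 / Real.Gamma (1 - α)) * ∫ z in (0:ℝ)..t, deriv u₀ z * (t - z) ^ (-α))
      (nhdsWithin 0 (Set.Ioi 0)) (nhds f₀) ∧
    Filter.Tendsto (fun t => -(deriv u₀ t)) (nhdsWithin 0 (Set.Iio 0)) (nhds f₀) := by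
  have hΓα : 0 < Real.Gamma α := Real.Gamma_pos_of_pos hα0
  have hΓ1α : 0 < Real.Gamma (1 - α) := Real.Gamma_pos_of_pos (by linarith)
  have hΓα1 : Real.Gamma (α + 1) = α * Real.Gamma α := Real.Gamma_add_one hα0.ne'
  have hβ1' : (0:ℝ) < β - 1 := by linarith
  have hΓβm1 : 0 < Real.Gamma (β - 1) := Real.Gamma_pos_of_pos hβ1'
  have hΓ2β : 0 < Real.Gamma (2 - β) := Real.Gamma_pos_of_pos (by linarith)
  have hβ0 : β ≠ 0 := by linarith
  have hΓβ : Real.Gamma (β + 1) = β * ((β - 1) * Real.Gamma (β - 1)) := by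
    have hb : Real.Gamma ((β - 1) + 1) = (β - 1) * Real.Gamma (β - 1) :=
      Real.Gamma_add_one hβ1'.ne'
    rw [show β - 1 + 1 = β by ring] at hb
    rw [Real.Gamma_add_one hβ0, hb]
  have hΓβ1pos : 0 < Real.Gamma (β + 1) := Real.Gamma_pos_of_pos (by linarith)
  -- derivative on the positive side
  have hderiv_pos : ∀ z : ℝ, 0 < z →
      HasDerivAt u₀ (f₀ * z ^ (α - 1) / Real.Gamma α) z := by
    intro z hz
    have h1 : HasDerivAt (fun t : ℝ => f₀ * (t ^ α - q ^ α) / Real.Gamma (α + 1))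
        (f₀ * (α * z ^ (α - 1)) / Real.Gamma (α + 1)) z :=
      (((Real.hasDerivAt_rpow_const (Or.inl hz.ne')).sub_const (q ^ α)).const_mul
        f₀).div_const _
    have h2 : f₀ * (α * z ^ (α - 1)) / Real.Gamma (α + 1)
        = f₀ * z ^ (α - 1) / Real.Gamma α := by
      rw [hΓα1]; field_simp
    rw [h2] at h1
    apply h1.congr_of_eventuallyEq
    filter_upwards [Ioi_mem_nhds hz] with t ht
    rw [hu₀ t, if_pos (le_of_lt ht)]
  -- derivative of (-t)^r on the negative side
  have hneg_rpow : ∀ (r z : ℝ), z < 0 →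
      HasDerivAt (fun t : ℝ => (-t) ^ r) (-(r * (-z) ^ (r - 1))) z := by
    intro r z hz
    have h := (Real.hasDerivAt_rpow_const (p := r)
      (Or.inl (by linarith : -z ≠ 0))).comp z (hasDerivAt_neg z)
    simpa [Function.comp_def] using h
  -- derivative on the negative side
  have hderiv_neg : ∀ z : ℝ, z < 0 → HasDerivAt u₀
      (f₀ * (-(β * (-z) ^ (β - 1)) / Real.Gamma (β + 1) - 1)) z := by
    intro z hz
    have h1 : HasDerivAt
        (fun t : ℝ => f₀ * (((-t) ^ β - p ^ β) / Real.Gamma (β + 1) - t - p))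
        (f₀ * (-(β * (-z) ^ (β - 1)) / Real.Gamma (β + 1) - 1)) z := by
      have := ((((hneg_rpow β z hz).sub_const (p ^ β)).div_const
        (Real.Gamma (β + 1))).sub (hasDerivAt_id z)).sub_const p
      simpa using this.const_mul f₀
    apply h1.congr_of_eventuallyEq
    filter_upwards [Iio_mem_nhds hz] with t ht
    rw [hu₀ t, if_neg (not_le.mpr ht)]
  -- second derivative on the negative side
  have hderiv2_neg : ∀ z : ℝ, z < 0 → HasDerivAt (deriv u₀)
      (f₀ * (-z) ^ (β - 2) / Real.Gamma (β - 1)) z := by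
    intro z hz
    have h1 : HasDerivAt
        (fun t : ℝ => f₀ * (-(β * (-t) ^ (β - 1)) / Real.Gamma (β + 1) - 1))
        (f₀ * (-(β * -((β - 1) * (-z) ^ (β - 1 - 1))) / Real.Gamma (β + 1))) z := by
      have := ((((hneg_rpow (β - 1) z hz).const_mul β).neg).div_const
        (Real.Gamma (β + 1))).sub_const 1
      simpa using this.const_mul f₀
    have h2 : f₀ * (-(β * -((β - 1) * (-z) ^ (β - 1 - 1))) / Real.Gamma (β + 1))
        = f₀ * (-z) ^ (β - 2) / Real.Gamma (β - 1) := by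
      rw [show β - 1 - 1 = β - 2 by ring, hΓβ]
      field_simp
    rw [h2] at h1
    apply h1.congr_of_eventuallyEq
    filter_upwards [Iio_mem_nhds hz] with t ht
    exact (hderiv_neg t ht).deriv
  -- (iii)
  have part3 : ∀ t ∈ Set.Ioo (0:ℝ) q,
      (1 / Real.Gamma (1 - α)) * ∫ z in (0:ℝ)..t, deriv u₀ z * (t - z) ^ (-α) = f₀ := by
    intro t ht
    have hI : (∫ z in (0:ℝ)..t, deriv u₀ z * (t - z) ^ (-α))
        = ∫ z in (0:ℝ)..t, (f₀ / Real.Gamma α) * (z ^ (α - 1) * (t - z) ^ (-α)) := by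
      apply intervalIntegral.integral_congr_ae
      refine Filter.Eventually.of_forall (fun z hz => ?_)
      rw [Set.uIoc_of_le (le_of_lt ht.1)] at hz
      rw [(hderiv_pos z hz.1).deriv]
      ring
    rw [hI, intervalIntegral.integral_const_mul, betac α t hα0 hα1 ht.1]
    field_simp
  -- (iv)
  have part4 : ∀ t ∈ Set.Ioo (-p) (0:ℝ),
      (1 / Real.Gamma (2 - β)) *
        ∫ z in t..(0:ℝ), deriv (deriv u₀) z * (z - t) ^ (1 - β) = f₀ := by
    intro t ht
    have h0ae : ∀ᵐ z : ℝ, z ≠ (0:ℝ) := by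
      have h0 : (volume : Measure ℝ) {(0:ℝ)} = 0 := measure_singleton 0
      exact MeasureTheory.ae_iff.mpr (by simpa using h0)
    have hI : (∫ z in t..(0:ℝ), deriv (deriv u₀) z * (z - t) ^ (1 - β))
        = ∫ z in t..(0:ℝ),
            (f₀ / Real.Gamma (β - 1)) * ((-z) ^ (β - 2) * (z - t) ^ (1 - β)) := by
      apply intervalIntegral.integral_congr_ae
      filter_upwards [h0ae] with z hz0 hz
      rw [Set.uIoc_of_le (le_of_lt ht.2)] at hz
      have hzneg : z < 0 := lt_of_le_of_ne hz.2 hz0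
      rw [(hderiv2_neg z hzneg).deriv]
      ring
    have hsub : (∫ z in t..(0:ℝ), (-z) ^ (β - 2) * (z - t) ^ (1 - β))
        = ∫ w in (0:ℝ)..(-t), w ^ (β - 2) * ((-t) - w) ^ (1 - β) := by
      have h := intervalIntegral.integral_comp_neg (a := t) (b := (0:ℝ))
        (fun w => w ^ (β - 2) * ((-t) - w) ^ (1 - β))
      rw [neg_zero] at h
      rw [← h]
      apply intervalIntegral.integral_congr
      intro z hz
      simp only
      rw [show (-t) - (-z) = z - t by ring]
    have hb := betac (β - 1) (-t) hβ1' (by linarith) (by linarith [ht.2])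
    rw [show β - 1 - 1 = β - 2 by ring, show -(β - 1) = 1 - β by ring,
      show 1 - (β - 1) = 2 - β by ring] at hb
    rw [hI, intervalIntegral.integral_const_mul, hsub, hb]
    field_simp
  refine ⟨?_, ?_, ?_, part3, part4, ?_, ?_⟩
  · -- (i)
    rw [Real.zero_rpow hα0.ne', Real.zero_rpow hβ0]
    linear_combination f₀ * hΔ0
  · rw [hu₀ q, if_pos hq.le]; simp
  · rw [hu₀ (-p), if_neg (by linarith)]
    simp
  · -- (v) first limit
    have hmem : Set.Ioo (0:ℝ) q ∈ nhdsWithin (0:ℝ) (Set.Ioi 0) :=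
      Ioo_mem_nhdsGT_of_mem ⟨le_refl 0, hq⟩
    refine Filter.Tendsto.congr' ?_ tendsto_const_nhds
    filter_upwards [hmem] with t ht
    exact (part3 t ht).symm
  · -- (v) second limit
    have hc : Filter.Tendsto (fun t : ℝ => (-t) ^ (β - 1)) (nhds 0) (nhds 0) := by
      have h1 : ContinuousAt (fun x : ℝ => x ^ (β - 1)) (-(0:ℝ)) := by
        rw [neg_zero]
        exact Real.continuousAt_rpow_const 0 (β - 1) (Or.inr (by linarith))
      have h2 := h1.comp (continuous_neg.continuousAt (x := (0:ℝ)))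
      have h3 : Filter.Tendsto (fun t : ℝ => (-t) ^ (β - 1)) (nhds 0)
          (nhds ((-(0:ℝ)) ^ (β - 1))) := h2
      simpa [Real.zero_rpow hβ1'.ne'] using h3
    have hG : Filter.Tendsto
        (fun t : ℝ => f₀ * (β * (-t) ^ (β - 1) / Real.Gamma (β + 1) + 1))
        (nhds 0) (nhds f₀) := by
      have := (((hc.const_mul β).div_const (Real.Gamma (β + 1))).add
        (tendsto_const_nhds (x := (1:ℝ)))).const_mul f₀
      simpa using this
    refine Filter.Tendsto.congr' ?_ (hG.mono_left nhdsWithin_le_nhds)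
    filter_upwards [self_mem_nhdsWithin] with t ht
    rw [(hderiv_neg t ht).deriv]
    ring
end
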